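/- arXiv:1912.08942 — 11 statements merged into one kernel-verified Lean document; each statement's English description precedes it below -/
import Mathlib

section
/- There exists a unique function g : ℝ → ℝ such that g(0) = 0 and g is differentiable at every t ∈ ℝ with g'(t) = (1 + 2·g(t)²)^(−1/2). Moreover this function g is odd (g(−t) = −g(t) for all t), strictly increasing, and a bijection from ℝ onto ℝ. -/
/-!
Let `F s = ∫₀ˢ √(1 + 2u²) du`. Its integrand is continuous, even and at least `1`, so `F` is an
odd, strictly increasing bijection of `ℝ`, and its inverse solves the equation by the inverse
function rule. Conversely, for any solution `g` the chain rule gives `(F ∘ g)' = 1`, so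
`F ∘ g = id` and `g = F⁻¹`.
-/

open Filter

section Primitive

variable {f : ℝ → ℝ}

theorem strictMono_intervalIntegral_of_pos (hf : Continuous f) (hpos : ∀ x, 0 < f x) :
    StrictMono fun s => ∫ u in (0 : ℝ)..s, f u :=
  strictMono_of_deriv_pos fun x => by
    rw [(hf.integral_hasStrictDerivAt 0 x).hasDerivAt.deriv]
    exact hpos x

theorem surjective_intervalIntegral_of_one_le (hf : Continuous f) (h1 : ∀ x, 1 ≤ f x) :
    Function.Surjective fun s => ∫ u in (0 : ℝ)..s, f u := by
  have hint (a b : ℝ) : IntervalIntegrable f MeasureTheory.volume a b := hf.intervalIntegrable a b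
  refine Continuous.surjective (by fun_prop) ?_ ?_
  · refine tendsto_atTop_mono' _ (eventually_atTop.2 ⟨0, fun s hs => ?_⟩) tendsto_id
    simpa using intervalIntegral.integral_mono_on hs intervalIntegrable_const (hint 0 s)
      fun x _ => h1 x
  · refine tendsto_atBot_mono' _ (eventually_atBot.2 ⟨0, fun s hs => ?_⟩) tendsto_id
    have := intervalIntegral.integral_mono_on hs intervalIntegrable_const (hint s 0)
      fun x _ => h1 x
    simp only [intervalIntegral.integral_const, smul_eq_mul, mul_one] at this
    simp only [id_eq]
    rw [intervalIntegral.integral_symm]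
    linarith

theorem intervalIntegral_zero_neg_of_even (heven : ∀ x, f (-x) = f x) (s : ℝ) :
    ∫ u in (0 : ℝ)..(-s), f u = -∫ u in (0 : ℝ)..s, f u := by
  rw [intervalIntegral.integral_symm, ← neg_zero, ← intervalIntegral.integral_comp_neg]
  simp only [heven, neg_zero]

noncomputable def primitiveOrderIso (hf : Continuous f) (h1 : ∀ x, 1 ≤ f x) : ℝ ≃o ℝ :=
  StrictMono.orderIsoOfSurjective _
    (strictMono_intervalIntegral_of_pos hf fun x => one_pos.trans_le (h1 x))
    (surjective_intervalIntegral_of_one_le hf h1)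

variable (hf : Continuous f) (h1 : ∀ x, 1 ≤ f x)

theorem primitiveOrderIso_apply (s : ℝ) :
    primitiveOrderIso hf h1 s = ∫ u in (0 : ℝ)..s, f u :=
  rfl

theorem primitiveOrderIso_symm_zero : (primitiveOrderIso hf h1).symm 0 = 0 := by
  rw [OrderIso.symm_apply_eq, primitiveOrderIso_apply, intervalIntegral.integral_same]

theorem primitiveOrderIso_symm_neg (heven : ∀ x, f (-x) = f x) (t : ℝ) :
    (primitiveOrderIso hf h1).symm (-t) = -(primitiveOrderIso hf h1).symm t := by
  rw [OrderIso.symm_apply_eq, primitiveOrderIso_apply, intervalIntegral_zero_neg_of_even heven,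
    ← primitiveOrderIso_apply hf h1, OrderIso.apply_symm_apply]

theorem hasDerivAt_primitiveOrderIso_symm (t : ℝ) :
    HasDerivAt (primitiveOrderIso hf h1).symm (f ((primitiveOrderIso hf h1).symm t))⁻¹ t :=
  HasDerivAt.of_local_left_inverse (primitiveOrderIso hf h1).symm.continuous.continuousAt
    (hf.integral_hasStrictDerivAt 0 _).hasDerivAt (one_pos.trans_le (h1 _)).ne'
    (Eventually.of_forall (primitiveOrderIso hf h1).apply_symm_apply)

theorem eq_primitiveOrderIso_symm_of_hasDerivAt {g : ℝ → ℝ} (h0 : g 0 = 0)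
    (hg : ∀ t, HasDerivAt g (f (g t))⁻¹ t) : g = (primitiveOrderIso hf h1).symm := by
  have hcomp (t : ℝ) : HasDerivAt (fun t => primitiveOrderIso hf h1 (g t) - t) 0 t := by
    have := ((hf.integral_hasStrictDerivAt 0 (g t)).hasDerivAt.comp t (hg t)).sub (hasDerivAt_id t)
    rwa [mul_inv_cancel₀ (one_pos.trans_le (h1 _)).ne', sub_self] at this
  funext t
  have hconst := is_const_of_deriv_eq_zero (fun t => (hcomp t).differentiableAt)
    (fun t => (hcomp t).deriv) t 0
  rw [OrderIso.eq_symm_apply]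
  simpa [h0, primitiveOrderIso_apply, sub_eq_zero] using hconst

end Primitive

theorem one_le_sqrt_one_add_two_mul_sq (x : ℝ) : 1 ≤ √(1 + 2 * x ^ 2) :=
  Real.one_le_sqrt.2 (by nlinarith [sq_nonneg x])

theorem rpow_neg_half_eq_inv_sqrt {x : ℝ} (hx : 0 ≤ x) : x ^ (-(1 / 2) : ℝ) = (√x)⁻¹ := by
  rw [Real.rpow_neg hx, ← Real.sqrt_eq_rpow]

/-- existence and uniqueness of `g` with `g 0 = 0` and
`g' t = (1 + 2 g(t)^2)^(-1/2)`, and every such `g` is odd, strictly increasing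
and a bijection of `ℝ` onto `ℝ`. -/
theorem stmt_0 :
    (∃! g : ℝ → ℝ, g 0 = 0 ∧
      ∀ t : ℝ, HasDerivAt g ((1 + 2 * g t ^ 2) ^ (-(1 / 2) : ℝ)) t) ∧
    (∀ g : ℝ → ℝ, g 0 = 0 →
      (∀ t : ℝ, HasDerivAt g ((1 + 2 * g t ^ 2) ^ (-(1 / 2) : ℝ)) t) →
      (∀ t : ℝ, g (-t) = -g t) ∧ StrictMono g ∧ Function.Bijective g) := by
  have hf : Continuous fun u : ℝ => √(1 + 2 * u ^ 2) := by fun_prop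
  set F := primitiveOrderIso hf one_le_sqrt_one_add_two_mul_sq
  have hsol (g : ℝ → ℝ) : (∀ t, HasDerivAt g ((1 + 2 * g t ^ 2) ^ (-(1 / 2) : ℝ)) t) ↔
      ∀ t, HasDerivAt g (√(1 + 2 * g t ^ 2))⁻¹ t := by
    simp only [rpow_neg_half_eq_inv_sqrt (by positivity : (0 : ℝ) ≤ 1 + 2 * _ ^ 2)]
  have huniq (g : ℝ → ℝ) (h0 : g 0 = 0)
      (hg : ∀ t, HasDerivAt g ((1 + 2 * g t ^ 2) ^ (-(1 / 2) : ℝ)) t) : g = F.symm :=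
    eq_primitiveOrderIso_symm_of_hasDerivAt hf _ h0 ((hsol g).1 hg)
  refine ⟨⟨F.symm, ⟨primitiveOrderIso_symm_zero hf _,
    (hsol _).2 (hasDerivAt_primitiveOrderIso_symm hf _)⟩, fun g hg => huniq g hg.1 hg.2⟩,
    fun g h0 hg => ?_⟩
  obtain rfl := huniq g h0 hg
  exact ⟨primitiveOrderIso_symm_neg hf _ (fun x => by rw [neg_sq]), F.symm.strictMono,
    F.symm.bijective⟩
end

section
/- For every t > 0 one has (1/2)·g(t) ≤ t·g'(t) ≤ g(t). -/
/-! With `u = 1 + 2 g²` and `φ = g √u`, the ODE gives `φ' = 1 + 2 g² / u ∈ [1, 2]`, so `φ(0) = 0`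
forces `t ≤ φ(t) ≤ 2t` for `t ≥ 0`. Dividing by `√u = 1 / g'` is the claim. -/

open Real

namespace SqrtInverseODE

variable {g : ℝ → ℝ} {c : ℝ}

theorem hasDerivAt_mul_sqrt (hc : 0 ≤ c) {x : ℝ}
    (hg : HasDerivAt g (√(1 + c * g x ^ 2))⁻¹ x) :
    HasDerivAt (fun s => g s * √(1 + c * g s ^ 2))
      (1 + c * g x ^ 2 / (1 + c * g x ^ 2)) x := by
  have hu : 0 < 1 + c * g x ^ 2 := by positivity
  refine (hg.mul ((((hg.pow 2).const_mul c).const_add 1).sqrt hu.ne')).congr_deriv ?_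
  simp only [Pi.pow_apply]
  field_simp
  rw [sq_sqrt hu.le]
  ring

theorem one_add_div_one_add_mem_Icc {a : ℝ} (ha : 0 ≤ a) : 1 + a / (1 + a) ∈ Set.Icc 1 2 := by
  have hle : a / (1 + a) ≤ 1 := div_le_one_of_le₀ (by linarith) (by linarith)
  constructor <;> linarith [div_nonneg ha (by linarith : (0 : ℝ) ≤ 1 + a)]

theorem le_mul_sqrt_le_two_mul (hc : 0 ≤ c) (hg0 : g 0 = 0)
    (hg : ∀ x, HasDerivAt g (√(1 + c * g x ^ 2))⁻¹ x) {t : ℝ} (ht : 0 ≤ t) :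
    t ≤ g t * √(1 + c * g t ^ 2) ∧ g t * √(1 + c * g t ^ 2) ≤ 2 * t := by
  have hφ := fun x => hasDerivAt_mul_sqrt hc (hg x)
  have hdiff : Differentiable ℝ (fun s => g s * √(1 + c * g s ^ 2)) :=
    fun x => (hφ x).differentiableAt
  have lower := mul_sub_le_image_sub_of_le_deriv hdiff
    (fun x => ((hφ x).deriv).symm ▸ (one_add_div_one_add_mem_Icc (by positivity)).1) ht
  have upper := image_sub_le_mul_sub_of_deriv_le hdiff
    (fun x => ((hφ x).deriv).symm ▸ (one_add_div_one_add_mem_Icc (by positivity)).2) ht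
  simp only [hg0, zero_mul, sub_zero, one_mul] at lower upper
  exact ⟨lower, upper⟩

end SqrtInverseODE

/-- `(1/2) g(t) ≤ t g'(t) ≤ g(t)` for every `t > 0`. -/
theorem stmt_2 (g : ℝ → ℝ) (hg0 : g 0 = 0)
    (hg : ∀ t : ℝ, HasDerivAt g ((1 + 2 * g t ^ 2) ^ (-(1 / 2) : ℝ)) t) :
    ∀ t : ℝ, 0 < t → (1 / 2) * g t ≤ t * deriv g t ∧ t * deriv g t ≤ g t := by
  have hg' : ∀ t, HasDerivAt g (√(1 + 2 * g t ^ 2))⁻¹ t := fun t => by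
    rw [sqrt_eq_rpow, ← rpow_neg (by positivity)]
    exact hg t
  intro t ht
  obtain ⟨lower, upper⟩ := SqrtInverseODE.le_mul_sqrt_le_two_mul zero_le_two hg0 hg' ht.le
  have hsqrt : 0 < √(1 + 2 * g t ^ 2) := sqrt_pos.2 (by positivity)
  rw [(hg' t).deriv, ← div_eq_mul_inv]
  constructor
  · rw [le_div_iff₀ hsqrt]; linarith
  · rw [div_le_iff₀ hsqrt]; linarith
end

section
/- There exists a constant K₀ > 0 such that |g(t)| ≤ K₀·|t|^(1/2) for every t ∈ ℝ. -/
/-- there is `K₀ > 0` with `|g(t)| ≤ K₀ |t|^(1/2)` for all `t`. -/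
theorem stmt_4 (g : ℝ → ℝ) (hg0 : g 0 = 0)
    (hg : ∀ t : ℝ, HasDerivAt g ((1 + 2 * g t ^ 2) ^ (-(1 / 2) : ℝ)) t) :
    ∃ K₀ : ℝ, 0 < K₀ ∧ ∀ t : ℝ, |g t| ≤ K₀ * |t| ^ ((1 : ℝ) / 2) := by
  -- derivative of g² is bounded by √2
  have key : ∀ t : ℝ, ‖2 * g t ^ 1 * (1 + 2 * g t ^ 2) ^ (-(1 / 2) : ℝ)‖ ≤ Real.sqrt 2 := by
    intro t
    set a := g t with ha
    have h1 : (0:ℝ) < 1 + 2 * a ^ 2 := by positivity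
    have h2 : (1 + 2 * a ^ 2) ^ (-(1 / 2) : ℝ) = (Real.sqrt (1 + 2 * a ^ 2))⁻¹ := by
      rw [Real.rpow_neg h1.le, Real.sqrt_eq_rpow]
    rw [Real.norm_eq_abs, h2, pow_one, abs_mul,
      abs_of_pos (inv_pos.mpr (Real.sqrt_pos.mpr h1))]
    rw [mul_inv_le_iff₀ (Real.sqrt_pos.mpr h1)]
    have h3 : |2 * a| = Real.sqrt (4 * a ^ 2) := by
      rw [show (4:ℝ) * a ^ 2 = (2*a)^2 by ring, Real.sqrt_sq_eq_abs]
    rw [h3, ← Real.sqrt_mul (by norm_num : (0:ℝ) ≤ 2)]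
    exact Real.sqrt_le_sqrt (by nlinarith)
  have hderiv : ∀ x ∈ (Set.univ : Set ℝ),
      HasDerivWithinAt (fun t => g t ^ 2)
        (2 * g x ^ 1 * ((1 + 2 * g x ^ 2) ^ (-(1 / 2) : ℝ))) Set.univ x := by
    intro x _
    exact ((hg x).pow 2).hasDerivWithinAt
  have lip : ∀ t : ℝ, g t ^ 2 ≤ Real.sqrt 2 * |t| := by
    intro t
    have := (convex_univ (𝕜 := ℝ)).norm_image_sub_le_of_norm_hasDerivWithin_le
      hderiv (fun x _ => key x) (Set.mem_univ 0) (Set.mem_univ t)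
    simp only [hg0, Real.norm_eq_abs, sub_zero] at this
    calc g t ^ 2 ≤ |g t ^ 2| := le_abs_self _
      _ ≤ Real.sqrt 2 * |t| := by simpa using this
  refine ⟨2, by norm_num, fun t => ?_⟩
  have hs2 : Real.sqrt 2 ≤ 2 := by
    nlinarith [Real.sq_sqrt (by norm_num : (0:ℝ) ≤ 2), Real.sqrt_nonneg 2]
  have h4 : g t ^ 2 ≤ 4 * |t| := by
    have := lip t
    nlinarith [abs_nonneg t]
  calc |g t| = Real.sqrt (g t ^ 2) := (Real.sqrt_sq_eq_abs _).symm
    _ ≤ Real.sqrt (4 * |t|) := Real.sqrt_le_sqrt h4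
    _ = 2 * |t| ^ ((1:ℝ)/2) := by
        rw [Real.sqrt_mul (by norm_num : (0:ℝ) ≤ 4),
          show Real.sqrt 4 = 2 by
            rw [show (4:ℝ) = 2^2 by norm_num, Real.sqrt_sq (by norm_num : (0:ℝ) ≤ 2)],
          Real.sqrt_eq_rpow]
end

section
/- For every t ∈ ℝ one has g(t)² − g(t)·g'(t)·t ≥ 0. -/
/-!
Write `s = √(1 + 2 g²)`, so that `g' = 1 / s` and `g² - g g' t = g (g s - t) / s`.
The function `H t = g(t) s(t) - t` has derivative `2 g² / (1 + 2 g²) ≥ 0` and vanishes at `0`,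
as does the increasing function `g`; hence `g(t)` and `H(t)` both have the sign of `t`, and their
product is nonnegative.
-/

open Real

theorem Monotone.mul_nonneg_of_map_eq_zero {α β : Type*} [LinearOrder α] [Ring β]
    [LinearOrder β] [IsOrderedRing β] {f h : α → β} {a : α} (hf : Monotone f)
    (hh : Monotone h) (hfa : f a = 0) (hha : h a = 0) (x : α) : 0 ≤ f x * h x := by
  rcases le_total a x with hax | hxa
  · exact mul_nonneg (hfa ▸ hf hax) (hha ▸ hh hax)
  · exact mul_nonneg_of_nonpos_of_nonpos (hfa ▸ hf hxa) (hha ▸ hh hxa)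

namespace InverseArcLength

variable {g : ℝ → ℝ} (hg : ∀ t : ℝ, HasDerivAt g ((1 + 2 * g t ^ 2) ^ (-(1 / 2) : ℝ)) t)
include hg

theorem hasDerivAt_inv_sqrt (t : ℝ) : HasDerivAt g (√(1 + 2 * g t ^ 2))⁻¹ t := by
  rw [sqrt_eq_rpow, ← rpow_neg (by positivity)]
  exact hg t

theorem monotone : Monotone g :=
  monotone_of_hasDerivAt_nonneg (hasDerivAt_inv_sqrt hg) fun t => by positivity

theorem hasDerivAt_mul_sqrt_sub_id (t : ℝ) :
    HasDerivAt (fun t => g t * √(1 + 2 * g t ^ 2) - t) (2 * g t ^ 2 / (1 + 2 * g t ^ 2)) t := by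
  have hpos : 0 < 1 + 2 * g t ^ 2 := by positivity
  have hg' := hasDerivAt_inv_sqrt hg t
  have hsq : √(1 + 2 * g t ^ 2) ^ 2 = 1 + 2 * g t ^ 2 := sq_sqrt hpos.le
  refine ((hg'.fun_mul ((((hg'.fun_pow 2).const_mul 2).const_add 1).sqrt hpos.ne')).fun_sub
    (hasDerivAt_id' t)).congr_deriv ?_
  simp only [Nat.cast_ofNat, Nat.add_one_sub_one, pow_one]
  field_simp
  rw [hsq]
  ring

theorem monotone_mul_sqrt_sub_id : Monotone fun t => g t * √(1 + 2 * g t ^ 2) - t :=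
  monotone_of_hasDerivAt_nonneg (hasDerivAt_mul_sqrt_sub_id hg) fun t => by positivity

end InverseArcLength

/-- `g(t)² − g(t) g'(t) t ≥ 0` for every real `t`. -/
theorem stmt_5 (g : ℝ → ℝ) (hg0 : g 0 = 0)
    (hg : ∀ t : ℝ, HasDerivAt g ((1 + 2 * g t ^ 2) ^ (-(1 / 2) : ℝ)) t) :
    ∀ t : ℝ, g t ^ 2 - g t * deriv g t * t ≥ 0 := by
  intro t
  have hsign : 0 ≤ g t * (g t * √(1 + 2 * g t ^ 2) - t) :=
    (InverseArcLength.monotone hg).mul_nonneg_of_map_eq_zero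
      (InverseArcLength.monotone_mul_sqrt_sub_id hg) hg0 (by simp [hg0]) t
  have hfactor : g t ^ 2 - g t * deriv g t * t
      = g t * (g t * √(1 + 2 * g t ^ 2) - t) / √(1 + 2 * g t ^ 2) := by
    rw [(InverseArcLength.hasDerivAt_inv_sqrt hg t).deriv]
    field_simp
  rw [hfactor]
  positivity
end

section
/- There exists a constant C > 0 such that |g(t)| ≥ C·|t| for every t with |t| ≤ 1, and |g(t)| ≥ C·|t|^(1/2) for every t with |t| > 1. -/
/-- there is `C > 0` with `|g(t)| ≥ C |t|` for `|t| ≤ 1` and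
`|g(t)| ≥ C |t|^(1/2)` for `|t| > 1`. -/
theorem stmt_6 (g : ℝ → ℝ) (hg0 : g 0 = 0)
    (hg : ∀ t : ℝ, HasDerivAt g ((1 + 2 * g t ^ 2) ^ (-(1 / 2) : ℝ)) t) :
    ∃ C : ℝ, 0 < C ∧
      (∀ t : ℝ, |t| ≤ 1 → C * |t| ≤ |g t|) ∧
      (∀ t : ℝ, 1 < |t| → C * |t| ^ ((1 : ℝ) / 2) ≤ |g t|) := by
  have hcont : Continuous fun u : ℝ => Real.sqrt (1 + 2 * u ^ 2) := by
    exact (continuous_const.add (continuous_const.mul (continuous_pow 2))).sqrt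
  set F : ℝ → ℝ := fun s => ∫ u in (0:ℝ)..s, Real.sqrt (1 + 2 * u ^ 2) with hF
  have hpos : ∀ x : ℝ, (0:ℝ) < 1 + 2 * x ^ 2 := fun x => by positivity
  have hF' : ∀ s : ℝ, HasDerivAt F (Real.sqrt (1 + 2 * s ^ 2)) s := fun s =>
    (hcont.integral_hasStrictDerivAt 0 s).hasDerivAt
  -- F (g t) = t
  have hcomp : ∀ t : ℝ, HasDerivAt (fun t => F (g t) - t) 0 t := by
    intro t
    have h1 := ((hF' (g t)).comp t (hg t)).sub (hasDerivAt_id t)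
    have h2 : Real.sqrt (1 + 2 * g t ^ 2) * (1 + 2 * g t ^ 2) ^ (-(1 / 2) : ℝ) - 1 = 0 := by
      rw [Real.sqrt_eq_rpow, ← Real.rpow_add (hpos (g t))]
      norm_num
    rw [h2] at h1
    exact h1
  have hFg : ∀ t : ℝ, F (g t) = t := by
    intro t
    have hconst : (fun t => F (g t) - t) t = (fun t => F (g t) - t) 0 :=
      is_const_of_deriv_eq_zero (fun x => (hcomp x).differentiableAt)
        (fun x => (hcomp x).deriv) t 0
    simp only [hg0] at hconst
    have : F 0 = 0 := by simp [hF]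
    simp only [this] at hconst
    linarith [hconst]
  -- |t| ≤ |g t| * sqrt(1 + 2 (g t)^2)
  have hkey : ∀ t : ℝ, |t| ≤ |g t| * Real.sqrt (1 + 2 * g t ^ 2) := by
    intro t
    have hb : ∀ u ∈ Set.uIoc (0:ℝ) (g t),
        ‖Real.sqrt (1 + 2 * u ^ 2)‖ ≤ Real.sqrt (1 + 2 * g t ^ 2) := by
      intro u hu
      rw [Real.norm_eq_abs, abs_of_nonneg (Real.sqrt_nonneg _)]
      apply Real.sqrt_le_sqrt
      rcases hu with ⟨h1, h2⟩
      rcases le_or_gt 0 (g t) with h | h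
      · simp only [min_eq_left h, max_eq_right h] at h1 h2
        nlinarith
      · simp only [min_eq_right h.le, max_eq_left h.le] at h1 h2
        nlinarith
    have := intervalIntegral.norm_integral_le_of_norm_le_const hb
    rw [show (∫ (x:ℝ) in (0:ℝ)..g t, Real.sqrt (1+2*x^2)) = t from hFg t] at this
    simpa [Real.norm_eq_abs, abs_sub_comm, mul_comm] using this
  -- |g t| ≤ |t|
  have hlip : ∀ t : ℝ, |g t| ≤ |t| := by
    intro t
    have := Convex.norm_image_sub_le_of_norm_hasDerivWithin_le
      (f := g) (f' := fun t => (1 + 2 * g t ^ 2) ^ (-(1 / 2) : ℝ)) (C := 1)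
      (fun x _ => (hg x).hasDerivWithinAt) (fun x _ => by
        rw [Real.norm_eq_abs, abs_of_nonneg (Real.rpow_nonneg (hpos (g x)).le _)]
        apply Real.rpow_le_one_of_one_le_of_nonpos
        · nlinarith [sq_nonneg (g x)]
        · norm_num) (convex_univ) (Set.mem_univ 0) (Set.mem_univ t)
    simpa [hg0, Real.norm_eq_abs] using this
  have h3 : (0:ℝ) < Real.sqrt 3 := Real.sqrt_pos.mpr (by norm_num)
  refine ⟨(Real.sqrt 3)⁻¹, inv_pos.mpr h3, ?_, ?_⟩
  · intro t ht
    have hgle : |g t| ≤ 1 := le_trans (hlip t) ht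
    have hs : Real.sqrt (1 + 2 * g t ^ 2) ≤ Real.sqrt 3 := by
      apply Real.sqrt_le_sqrt
      nlinarith [sq_abs (g t), sq_nonneg (1 - |g t|), abs_nonneg (g t)]
    have := hkey t
    have h4 : |t| ≤ |g t| * Real.sqrt 3 :=
      this.trans (mul_le_mul_of_nonneg_left hs (abs_nonneg _))
    rw [inv_mul_le_iff₀ h3, mul_comm]
    exact h4
  · intro t ht
    set a := |g t| with ha
    set s := Real.sqrt (1 + 2 * g t ^ 2) with hs
    have hs2 : s ^ 2 = 1 + 2 * a ^ 2 := by
      rw [hs, Real.sq_sqrt (hpos (g t)).le, ha, sq_abs]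
    have hsnn : 0 ≤ s := Real.sqrt_nonneg _
    have hann : 0 ≤ a := abs_nonneg _
    have hk : |t| ≤ a * s := hkey t
    have hquad : |t| ≤ 3 * a ^ 2 := by nlinarith [sq_nonneg (a*s - |t|), sq_nonneg a, sq_nonneg (a^2 - 1)]
    have hsqrt : Real.sqrt (|t| / 3) ≤ a := by
      rw [show a = Real.sqrt (a ^ 2) by rw [Real.sqrt_sq hann]]
      apply Real.sqrt_le_sqrt
      linarith
    rw [show |t| ^ ((1:ℝ)/2) = Real.sqrt |t| by rw [Real.sqrt_eq_rpow]]
    calc (Real.sqrt 3)⁻¹ * Real.sqrt |t| = Real.sqrt |t| / Real.sqrt 3 := by ring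
      _ = Real.sqrt (|t| / 3) := by
          rw [Real.sqrt_div (abs_nonneg t)]
      _ ≤ a := hsqrt
end

section
/- The derivative g' of g is strictly decreasing on the interval (0, ∞) and strictly increasing on the interval (−∞, 0); equivalently, the second derivative of g satisfies g''(t) < 0 for every t > 0 and g''(t) > 0 for every t < 0. -/
/-!
Write `g' = φ ∘ g` with `φ x = (1 + 2x²)^(-1/2) > 0`. Then `g` is strictly increasing with
`g 0 = 0`, so `g t` has the sign of `t`, and `g'' = (φ' ∘ g) · g'` has the sign of `φ' ∘ g`.
Since `φ' x = -2x (1 + 2x²)^(-3/2)`, `φ` decreases on `[0, ∞)` and increases on `(-∞, 0]`,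
and composing with the increasing `g` gives the monotonicity of `g'`.
-/

open Set

section AutonomousODE

variable {g φ : ℝ → ℝ}

lemma deriv_eq_comp_of_hasDerivAt (hg : ∀ t, HasDerivAt g (φ (g t)) t) : deriv g = φ ∘ g :=
  funext fun t => (hg t).deriv

lemma strictMono_of_hasDerivAt_comp_pos (hg : ∀ t, HasDerivAt g (φ (g t)) t)
    (hφ : ∀ x, 0 < φ x) : StrictMono g :=
  strictMono_of_deriv_pos fun t => (hg t).deriv ▸ hφ (g t)

lemma deriv_deriv_of_hasDerivAt_comp (hg : ∀ t, HasDerivAt g (φ (g t)) t)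
    (hφ : Differentiable ℝ φ) (t : ℝ) : deriv (deriv g) t = deriv φ (g t) * φ (g t) := by
  rw [deriv_eq_comp_of_hasDerivAt hg]
  exact ((hφ (g t)).hasDerivAt.comp t (hg t)).deriv

end AutonomousODE

noncomputable def invSqrtOnePlusTwoSq (x : ℝ) : ℝ := (1 + 2 * x ^ 2) ^ (-(1 / 2) : ℝ)

namespace invSqrtOnePlusTwoSq

lemma one_add_two_sq_pos (x : ℝ) : 0 < 1 + 2 * x ^ 2 := by positivity

lemma pos (x : ℝ) : 0 < invSqrtOnePlusTwoSq x :=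
  Real.rpow_pos_of_pos (one_add_two_sq_pos x) _

lemma hasDerivAt (x : ℝ) :
    HasDerivAt invSqrtOnePlusTwoSq (-(2 * x) * (1 + 2 * x ^ 2) ^ (-(3 / 2) : ℝ)) x := by
  have hquad : HasDerivAt (fun y : ℝ => 1 + 2 * y ^ 2) (4 * x) x := by
    refine (((hasDerivAt_pow 2 x).const_mul 2).const_add 1).congr_deriv ?_
    push_cast
    ring
  refine (hquad.rpow_const (p := -(1 / 2)) (Or.inl (one_add_two_sq_pos x).ne')).congr_deriv ?_
  rw [show (-(1 / 2) : ℝ) - 1 = -(3 / 2) by norm_num]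
  ring

lemma differentiable : Differentiable ℝ invSqrtOnePlusTwoSq :=
  fun x => (hasDerivAt x).differentiableAt

lemma deriv_neg_of_pos {x : ℝ} (hx : 0 < x) : deriv invSqrtOnePlusTwoSq x < 0 := by
  rw [(hasDerivAt x).deriv]
  exact mul_neg_of_neg_of_pos (by linarith) (Real.rpow_pos_of_pos (one_add_two_sq_pos x) _)

lemma deriv_pos_of_neg {x : ℝ} (hx : x < 0) : 0 < deriv invSqrtOnePlusTwoSq x := by
  rw [(hasDerivAt x).deriv]
  exact mul_pos (by linarith) (Real.rpow_pos_of_pos (one_add_two_sq_pos x) _)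

lemma strictAntiOn_Ici : StrictAntiOn invSqrtOnePlusTwoSq (Ici 0) :=
  strictAntiOn_of_deriv_neg (convex_Ici 0) differentiable.continuous.continuousOn
    fun _ hx => deriv_neg_of_pos (by simpa using hx)

lemma strictMonoOn_Iic : StrictMonoOn invSqrtOnePlusTwoSq (Iic 0) :=
  strictMonoOn_of_deriv_pos (convex_Iic 0) differentiable.continuous.continuousOn
    fun _ hx => deriv_pos_of_neg (by simpa using hx)

end invSqrtOnePlusTwoSq

/-- `g'` is strictly decreasing on `(0,∞)` and strictly increasing
on `(−∞,0)`; equivalently `g''(t) < 0` for `t > 0` and `g''(t) > 0` for `t < 0`. -/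
theorem stmt_7 (g : ℝ → ℝ) (hg0 : g 0 = 0)
    (hg : ∀ t : ℝ, HasDerivAt g ((1 + 2 * g t ^ 2) ^ (-(1 / 2) : ℝ)) t) :
    StrictAntiOn (deriv g) (Set.Ioi (0 : ℝ)) ∧
    StrictMonoOn (deriv g) (Set.Iio (0 : ℝ)) ∧
    (∀ t : ℝ, 0 < t → deriv (deriv g) t < 0) ∧
    (∀ t : ℝ, t < 0 → 0 < deriv (deriv g) t) := by
  have hode : ∀ t, HasDerivAt g (invSqrtOnePlusTwoSq (g t)) t := hg
  have hmono := strictMono_of_hasDerivAt_comp_pos hode invSqrtOnePlusTwoSq.pos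
  have hpos {t : ℝ} (ht : 0 < t) : 0 < g t := hg0 ▸ hmono ht
  have hneg {t : ℝ} (ht : t < 0) : g t < 0 := hg0 ▸ hmono ht
  have hg' := deriv_eq_comp_of_hasDerivAt hode
  have hg'' := deriv_deriv_of_hasDerivAt_comp hode invSqrtOnePlusTwoSq.differentiable
  refine ⟨?_, ?_, fun t ht => ?_, fun t ht => ?_⟩
  · rw [hg']
    exact invSqrtOnePlusTwoSq.strictAntiOn_Ici.comp_strictMonoOn (hmono.strictMonoOn _)
      fun t ht => (hpos ht).le
  · rw [hg']
    exact invSqrtOnePlusTwoSq.strictMonoOn_Iic.comp (hmono.strictMonoOn _)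
      fun t ht => (hneg ht).le
  · rw [hg'']
    exact mul_neg_of_neg_of_pos (invSqrtOnePlusTwoSq.deriv_neg_of_pos (hpos ht))
      (invSqrtOnePlusTwoSq.pos _)
  · rw [hg'']
    exact mul_pos (invSqrtOnePlusTwoSq.deriv_pos_of_neg (hneg ht)) (invSqrtOnePlusTwoSq.pos _)
end

section
/- Let p ∈ (0,1) be real. Then the function t ↦ g(t)^p · t^(−1) is strictly decreasing on the interval (0, ∞). -/
/-- for `p ∈ (0,1)`, the function `t ↦ g(t)^p · t⁻¹` is strictly
decreasing on `(0,∞)`. -/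
theorem stmt_9 (g : ℝ → ℝ) (hg0 : g 0 = 0)
    (hg : ∀ t : ℝ, HasDerivAt g ((1 + 2 * g t ^ 2) ^ (-(1 / 2) : ℝ)) t)
    (p : ℝ) (hp0 : 0 < p) (hp1 : p < 1) :
    StrictAntiOn (fun t : ℝ => g t ^ p * t⁻¹) (Set.Ioi (0 : ℝ)) := by
  set φ : ℝ → ℝ := fun t => (1 + 2 * g t ^ 2) ^ (-(1 / 2) : ℝ) with hφ
  have hφpos : ∀ t, 0 < φ t := fun t =>
    Real.rpow_pos_of_pos (by positivity) _
  -- g strictly monotone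
  have hgmono : StrictMono g := by
    apply strictMono_of_deriv_pos
    intro t
    rw [(hg t).deriv]
    exact hφpos t
  have hgpos : ∀ t : ℝ, 0 < t → 0 < g t := by
    intro t ht
    have := hgmono ht
    rwa [hg0] at this
  -- key inequality: t * φ t ≤ g t for t > 0
  have hkey : ∀ t : ℝ, 0 < t → t * φ t ≤ g t := by
    intro t ht
    obtain ⟨c, hc, hcslope⟩ := exists_hasDerivAt_eq_slope g φ ht
      (fun x _ => (hg x).continuousAt.continuousWithinAt) (fun x _ => hg x)
    have hφc : φ t ≤ φ c := by
      have hgc : 0 ≤ g c := by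
        have := hgpos c hc.1
        linarith
      have hgct : g c ≤ g t := (hgmono hc.2).le
      have hbase : 1 + 2 * g c ^ 2 ≤ 1 + 2 * g t ^ 2 := by nlinarith
      exact Real.rpow_le_rpow_of_nonpos (by positivity) hbase (by norm_num)
    have : φ c = g t / t := by rw [hcslope, hg0]; ring_nf
    rw [this] at hφc
    calc t * φ t ≤ t * (g t / t) := by nlinarith
      _ = g t := by field_simp
  -- derivative of the function
  have hf' : ∀ t : ℝ, 0 < t →
      HasDerivAt (fun t : ℝ => g t ^ p * t⁻¹)
        ((φ t * p * g t ^ (p - 1)) * t⁻¹ + g t ^ p * (-(t ^ 2)⁻¹)) t := by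
    intro t ht
    have h1 : HasDerivAt (fun t : ℝ => g t ^ p) (φ t * p * g t ^ (p - 1)) t :=
      (hg t).rpow_const (Or.inl (hgpos t ht).ne')
    exact h1.mul (hasDerivAt_inv ht.ne')
  apply strictAntiOn_of_deriv_neg (convex_Ioi 0)
  · exact fun t ht => (hf' t ht).continuousAt.continuousWithinAt
  · intro t ht
    rw [interior_Ioi] at ht
    have ht : (0 : ℝ) < t := ht
    rw [(hf' t ht).deriv]
    have hA : 0 < g t ^ (p - 1) := Real.rpow_pos_of_pos (hgpos t ht) _
    have hgp : g t ^ p = g t ^ (p - 1) * g t := by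
      rw [← Real.rpow_add_one (hgpos t ht).ne' (p - 1)]; ring_nf
    have key : p * (t * φ t) < g t := by
      have h1 : p * (t * φ t) < t * φ t := by
        have := mul_pos ht (hφpos t)
        nlinarith
      exact lt_of_lt_of_le h1 (hkey t ht)
    rw [hgp]
    have hlt : (φ t * p * g t ^ (p - 1)) * t⁻¹ < g t ^ (p - 1) * g t * (t ^ 2)⁻¹ := by
      rw [inv_eq_one_div, inv_eq_one_div, mul_one_div, mul_one_div,
        div_lt_div_iff₀ ht (by positivity)]
      nlinarith [mul_lt_mul_of_pos_left key (mul_pos hA ht)]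
    linarith
end

section
/- Let r ≥ 1 be real. Then the function t ↦ g(t)^r·g'(t) is strictly increasing on the interval (0, ∞). -/
open Real

lemma key_ineq {x y : ℝ} (hx : 0 < x) (hxy : x < y) {r : ℝ} (hr : 1 ≤ r) :
    x ^ r * (1 + 2 * x ^ 2) ^ (-(1 / 2) : ℝ) < y ^ r * (1 + 2 * y ^ 2) ^ (-(1 / 2) : ℝ) := by
  have hy : 0 < y := hx.trans hxy
  have hA : (0:ℝ) < 1 + 2 * x ^ 2 := by positivity
  have hB : (0:ℝ) < 1 + 2 * y ^ 2 := by positivity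
  have hsA : (0:ℝ) < Real.sqrt (1 + 2 * x ^ 2) := Real.sqrt_pos.mpr hA
  have hsB : (0:ℝ) < Real.sqrt (1 + 2 * y ^ 2) := Real.sqrt_pos.mpr hB
  have eA : (1 + 2 * x ^ 2) ^ (-(1 / 2) : ℝ) = (Real.sqrt (1 + 2 * x ^ 2))⁻¹ := by
    rw [Real.rpow_neg hA.le, Real.sqrt_eq_rpow]
  have eB : (1 + 2 * y ^ 2) ^ (-(1 / 2) : ℝ) = (Real.sqrt (1 + 2 * y ^ 2))⁻¹ := by
    rw [Real.rpow_neg hB.le, Real.sqrt_eq_rpow]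
  rw [eA, eB, ← div_eq_mul_inv, ← div_eq_mul_inv, div_lt_div_iff₀ hsA hsB]
  -- goal : x ^ r * √B < y ^ r * √A
  have h2 : (x ^ r * Real.sqrt (1 + 2 * y ^ 2)) ^ 2
      < (y ^ r * Real.sqrt (1 + 2 * x ^ 2)) ^ 2 := by
    rw [mul_pow, mul_pow, Real.sq_sqrt hA.le, Real.sq_sqrt hB.le,
      ← Real.rpow_natCast (x ^ r) 2, ← Real.rpow_natCast (y ^ r) 2,
      ← Real.rpow_mul hx.le, ← Real.rpow_mul hy.le]
    norm_num
    -- goal : x ^ (r*2) * (1 + 2*y^2) < y ^ (r*2) * (1 + 2*x^2)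
    have h1 : x ^ (r * 2) < y ^ (r * 2) :=
      Real.rpow_lt_rpow hx.le hxy (by linarith)
    have h3 : x ^ (r * 2 - 2) ≤ y ^ (r * 2 - 2) :=
      Real.rpow_le_rpow hx.le hxy.le (by linarith)
    have ex : x ^ (r * 2) = x ^ (r * 2 - 2) * x ^ 2 := by
      rw [← Real.rpow_natCast x 2, ← Real.rpow_add hx]; norm_num
    have ey : y ^ (r * 2) = y ^ (r * 2 - 2) * y ^ 2 := by
      rw [← Real.rpow_natCast y 2, ← Real.rpow_add hy]; norm_num
    rw [ex, ey]
    nlinarith [sq_nonneg x, sq_nonneg y, Real.rpow_pos_of_pos hx (r*2-2),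
      mul_le_mul_of_nonneg_right h3 (by positivity : (0:ℝ) ≤ x^2 * y^2)]
  exact lt_of_pow_lt_pow_left₀ 2 (by positivity) h2

/-- for `r ≥ 1`, the function `t ↦ g(t)^r g'(t)` is strictly
increasing on `(0,∞)`. -/
theorem stmt_12 (g : ℝ → ℝ) (hg0 : g 0 = 0)
    (hg : ∀ t : ℝ, HasDerivAt g ((1 + 2 * g t ^ 2) ^ (-(1 / 2) : ℝ)) t)
    (r : ℝ) (hr : 1 ≤ r) :
    StrictMonoOn (fun t : ℝ => g t ^ r * deriv g t) (Set.Ioi (0 : ℝ)) := by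
  have hpos : ∀ t, 0 < deriv g t := fun t => by
    rw [(hg t).deriv]; positivity
  have hmono : StrictMono g := strictMono_of_deriv_pos hpos
  intro a ha b _ hab
  simp only
  rw [(hg a).deriv, (hg b).deriv]
  exact key_ineq (hg0 ▸ hmono ha) (hmono hab) hr
end

section
/- Let v : Ω → ℝ be measurable with v(x) > 0 for a.e. x ∈ Ω. Then the following three conditions are equivalent: (a) the function x ↦ h(x)·v(x)^(1−γ) is integrable on Ω; (b) the function x ↦ h(x)·g(v(x))^(−γ)·g'(v(x))·v(x) is integrable on Ω; (c) the function x ↦ h(x)·g(v(x))^(1−γ) is integrable on Ω. -/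
/-!
Write `A = v^(1-γ)`, `B = g(v)^(-γ) g'(v) v` and `C = g(v)^(1-γ)`. Since `g' = (1 + 2g²)^(-1/2)`
decreases as `g` grows, `g` is concave on `[0, ∞)` with `g(0) = 0` and `g'(0) = 1`; hence
`t g'(t) ≤ g(t) ≤ t`, which gives `A ≤ C` and `B ≤ C`. Conversely `g` is comparable to `t` near `0`
and bounded below away from `0`, so `C ≤ K (A + 1)` and `C ≤ K (B + 1)`. As `h` is integrable and
nonnegative, each of `h A` and `h B` is integrable exactly when `h C` is.
-/

open MeasureTheory Set Real

namespace MeasureTheory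

variable {α : Type*} [MeasurableSpace α] {μ : Measure α} {h v : α → ℝ} {s : Set ℝ}
  {φ ψ : ℝ → ℝ} {a b : ℝ}

theorem Integrable.mul_comp_of_le_affine (hh : Integrable h μ) (hh0 : ∀ᵐ x ∂μ, 0 ≤ h x)
    (hv : AEMeasurable v μ) (hvs : ∀ᵐ x ∂μ, v x ∈ s) (hψ : Measurable ψ)
    (hψ0 : ∀ w ∈ s, 0 ≤ ψ w) (hψφ : ∀ w ∈ s, ψ w ≤ a * φ w + b)
    (hφi : Integrable (fun x => h x * φ (v x)) μ) :
    Integrable (fun x => h x * ψ (v x)) μ := by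
  refine ((hφi.const_mul a).add (hh.const_mul b)).mono'
    (hh.aestronglyMeasurable.mul (hψ.comp_aemeasurable hv).aestronglyMeasurable) ?_
  filter_upwards [hh0, hvs] with x hx hvx
  rw [Real.norm_eq_abs, abs_of_nonneg (mul_nonneg hx (hψ0 _ hvx))]
  calc h x * ψ (v x) ≤ h x * (a * φ (v x) + b) := mul_le_mul_of_nonneg_left (hψφ _ hvx) hx
    _ = a * (h x * φ (v x)) + b * h x := by ring

theorem integrable_mul_comp_iff_of_le_of_le_affine (hh : Integrable h μ)
    (hh0 : ∀ᵐ x ∂μ, 0 ≤ h x) (hv : AEMeasurable v μ) (hvs : ∀ᵐ x ∂μ, v x ∈ s)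
    (hφ : Measurable φ) (hψ : Measurable ψ) (hφ0 : ∀ w ∈ s, 0 ≤ φ w)
    (hφψ : ∀ w ∈ s, φ w ≤ ψ w) (hψφ : ∀ w ∈ s, ψ w ≤ a * φ w + b) :
    Integrable (fun x => h x * φ (v x)) μ ↔ Integrable (fun x => h x * ψ (v x)) μ :=
  ⟨hh.mul_comp_of_le_affine hh0 hv hvs hψ (fun w hw => (hφ0 w hw).trans (hφψ w hw)) hψφ,
    hh.mul_comp_of_le_affine (a := 1) (b := 0) hh0 hv hvs hφ hφ0
      (fun w hw => by simpa using hφψ w hw)⟩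

end MeasureTheory

structure IsChangeOfVariables (g : ℝ → ℝ) : Prop where
  map_zero : g 0 = 0
  hasDerivAt : ∀ t, HasDerivAt g ((1 + 2 * g t ^ 2) ^ (-(1 / 2) : ℝ)) t

namespace IsChangeOfVariables

variable {g : ℝ → ℝ} {γ t : ℝ}

theorem deriv_eq (hg : IsChangeOfVariables g) (t : ℝ) :
    deriv g t = (1 + 2 * g t ^ 2) ^ (-(1 / 2) : ℝ) :=
  (hg.hasDerivAt t).deriv

theorem differentiable (hg : IsChangeOfVariables g) : Differentiable ℝ g :=
  fun t => (hg.hasDerivAt t).differentiableAt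

theorem deriv_pos (hg : IsChangeOfVariables g) (t : ℝ) : 0 < deriv g t := by
  rw [hg.deriv_eq]
  positivity

theorem strictMono (hg : IsChangeOfVariables g) : StrictMono g :=
  strictMono_of_deriv_pos hg.deriv_pos

theorem pos (hg : IsChangeOfVariables g) (ht : 0 < t) : 0 < g t :=
  hg.map_zero ▸ hg.strictMono ht

theorem nonneg (hg : IsChangeOfVariables g) (ht : 0 ≤ t) : 0 ≤ g t :=
  hg.map_zero ▸ hg.strictMono.monotone ht

theorem antitoneOn_deriv (hg : IsChangeOfVariables g) : AntitoneOn (deriv g) (Ici 0) := by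
  intro s hs t _ hst
  simp only [hg.deriv_eq]
  have hgs := hg.nonneg hs
  have hgst : g s ≤ g t := hg.strictMono.monotone hst
  exact rpow_le_rpow_of_nonpos (by positivity) (by nlinarith) (by norm_num)

theorem concaveOn (hg : IsChangeOfVariables g) : ConcaveOn ℝ (Ici 0) g :=
  hg.antitoneOn_deriv.mono interior_subset |>.concaveOn_of_deriv (convex_Ici 0)
    hg.differentiable.continuous.continuousOn hg.differentiable.differentiableOn

theorem le_self (hg : IsChangeOfVariables g) (ht : 0 < t) : g t ≤ t := by
  have hslope := hg.concaveOn.slope_le_deriv self_mem_Ici ht.le ht (hg.differentiable 0)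
  rw [slope_def_field, hg.deriv_eq, hg.map_zero, sub_zero, sub_zero, div_le_iff₀ ht] at hslope
  simpa using hslope

theorem mul_deriv_le (hg : IsChangeOfVariables g) (ht : 0 < t) : t * deriv g t ≤ g t := by
  have hslope := hg.concaveOn.deriv_le_slope self_mem_Ici ht.le ht (hg.differentiable t)
  rw [slope_def_field, hg.map_zero, sub_zero, sub_zero, le_div_iff₀ ht] at hslope
  linarith

theorem deriv_one_le (hg : IsChangeOfVariables g) (ht : 1 ≤ t) : deriv g 1 ≤ g t :=
  calc deriv g 1 = 1 * deriv g 1 := (one_mul _).symm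
    _ ≤ g 1 := hg.mul_deriv_le one_pos
    _ ≤ g t := hg.strictMono.monotone ht

theorem deriv_one_le_deriv (hg : IsChangeOfVariables g) (ht : 0 < t) (ht1 : t ≤ 1) :
    deriv g 1 ≤ deriv g t :=
  hg.antitoneOn_deriv ht.le (mem_Ici.2 zero_le_one) ht1

theorem deriv_one_mul_le (hg : IsChangeOfVariables g) (ht : 0 < t) (ht1 : t ≤ 1) :
    deriv g 1 * t ≤ g t :=
  calc deriv g 1 * t ≤ t * deriv g t := by
        rw [mul_comm]; exact mul_le_mul_of_nonneg_left (hg.deriv_one_le_deriv ht ht1) ht.le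
    _ ≤ g t := hg.mul_deriv_le ht

theorem rpow_le_deriv_one_rpow (hg : IsChangeOfVariables g) (hγ : 1 ≤ γ) (ht : 1 ≤ t) :
    g t ^ (1 - γ) ≤ deriv g 1 ^ (1 - γ) :=
  rpow_le_rpow_of_nonpos (hg.deriv_pos 1) (hg.deriv_one_le ht) (by linarith)

theorem rpow_neg_mul_self (hg : IsChangeOfVariables g) (ht : 0 < t) :
    g t ^ (-γ) * g t = g t ^ (1 - γ) := by
  rw [show 1 - γ = -γ + 1 by ring, rpow_add_one (hg.pos ht).ne']

theorem self_rpow_le_rpow (hg : IsChangeOfVariables g) (hγ : 1 ≤ γ) (ht : 0 < t) :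
    t ^ (1 - γ) ≤ g t ^ (1 - γ) :=
  rpow_le_rpow_of_nonpos (hg.pos ht) (hg.le_self ht) (by linarith)

theorem rpow_le_affine_self_rpow (hg : IsChangeOfVariables g) (hγ : 1 ≤ γ) (ht : 0 < t) :
    g t ^ (1 - γ) ≤ deriv g 1 ^ (1 - γ) * t ^ (1 - γ) + deriv g 1 ^ (1 - γ) := by
  have hc := hg.deriv_pos 1
  rcases le_total t 1 with ht1 | ht1
  · have hbound : g t ^ (1 - γ) ≤ (deriv g 1 * t) ^ (1 - γ) :=
      rpow_le_rpow_of_nonpos (by positivity) (hg.deriv_one_mul_le ht ht1) (by linarith)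
    rw [mul_rpow hc.le ht.le] at hbound
    linarith [rpow_nonneg hc.le (1 - γ)]
  · have hC := hg.rpow_le_deriv_one_rpow hγ ht1
    nlinarith [rpow_nonneg hc.le (1 - γ), rpow_nonneg ht.le (1 - γ)]

theorem rpow_neg_mul_deriv_mul_nonneg (hg : IsChangeOfVariables g) (ht : 0 < t) :
    0 ≤ g t ^ (-γ) * deriv g t * t :=
  mul_nonneg (mul_nonneg (rpow_nonneg (hg.pos ht).le _) (hg.deriv_pos t).le) ht.le

theorem rpow_neg_mul_deriv_mul_le (hg : IsChangeOfVariables g) (ht : 0 < t) :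
    g t ^ (-γ) * deriv g t * t ≤ g t ^ (1 - γ) :=
  calc g t ^ (-γ) * deriv g t * t = g t ^ (-γ) * (t * deriv g t) := by ring
    _ ≤ g t ^ (-γ) * g t :=
        mul_le_mul_of_nonneg_left (hg.mul_deriv_le ht) (rpow_nonneg (hg.pos ht).le _)
    _ = g t ^ (1 - γ) := hg.rpow_neg_mul_self ht

theorem rpow_le_affine_rpow_neg_mul_deriv_mul (hg : IsChangeOfVariables g) (hγ : 1 ≤ γ)
    (ht : 0 < t) :
    g t ^ (1 - γ) ≤ (deriv g 1)⁻¹ * (g t ^ (-γ) * deriv g t * t) + deriv g 1 ^ (1 - γ) := by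
  have hc := hg.deriv_pos 1
  rcases le_total t 1 with ht1 | ht1
  · have ht_le : t ≤ (deriv g 1)⁻¹ * deriv g t * t := by
      rw [inv_mul_eq_div, le_mul_iff_one_le_left ht, one_le_div hc]
      exact hg.deriv_one_le_deriv ht ht1
    calc g t ^ (1 - γ) = g t ^ (-γ) * g t := (hg.rpow_neg_mul_self ht).symm
      _ ≤ g t ^ (-γ) * ((deriv g 1)⁻¹ * deriv g t * t) :=
          mul_le_mul_of_nonneg_left ((hg.le_self ht).trans ht_le)
            (rpow_nonneg (hg.pos ht).le _)
      _ = (deriv g 1)⁻¹ * (g t ^ (-γ) * deriv g t * t) := by ring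
      _ ≤ _ := le_add_of_nonneg_right (rpow_nonneg hc.le _)
  · have hC := hg.rpow_le_deriv_one_rpow hγ ht1
    have hB := mul_nonneg (inv_nonneg.2 hc.le) (hg.rpow_neg_mul_deriv_mul_nonneg (γ := γ) ht)
    linarith

end IsChangeOfVariables

theorem stmt_13_general (N : ℕ)
    (Ω : Set (EuclideanSpace ℝ (Fin N)))
    (γ : ℝ) (hγ : 1 < γ)
    (g : ℝ → ℝ) (hg0 : g 0 = 0)
    (hg : ∀ t : ℝ, HasDerivAt g ((1 + 2 * g t ^ 2) ^ (-(1 / 2) : ℝ)) t)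
    (h : EuclideanSpace ℝ (Fin N) → ℝ)
    (hh_int : IntegrableOn h Ω)
    (hh_pos : ∀ᵐ x ∂(volume.restrict Ω), 0 < h x)
    (v : EuclideanSpace ℝ (Fin N) → ℝ)
    (hv_meas : AEMeasurable v (volume.restrict Ω))
    (hv_pos : ∀ᵐ x ∂(volume.restrict Ω), 0 < v x) :
    (IntegrableOn (fun x => h x * v x ^ (1 - γ)) Ω ↔
      IntegrableOn (fun x => h x * g (v x) ^ (-γ) * deriv g (v x) * v x) Ω) ∧
    (IntegrableOn (fun x => h x * g (v x) ^ (-γ) * deriv g (v x) * v x) Ω ↔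
      IntegrableOn (fun x => h x * g (v x) ^ (1 - γ)) Ω) := by
  have hG : IsChangeOfVariables g := ⟨hg0, hg⟩
  have hh0 : ∀ᵐ x ∂(volume.restrict Ω), 0 ≤ h x := hh_pos.mono fun _ => le_of_lt
  have hgm : Measurable g := hG.differentiable.continuous.measurable
  have hAC : IntegrableOn (fun x => h x * v x ^ (1 - γ)) Ω ↔
      IntegrableOn (fun x => h x * g (v x) ^ (1 - γ)) Ω :=
    integrable_mul_comp_iff_of_le_of_le_affine (s := Ioi 0) hh_int hh0 hv_meas hv_pos
      (measurable_id.pow_const _) (hgm.pow_const _) (fun _ hw => rpow_nonneg (le_of_lt hw) _)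
      (fun _ hw => hG.self_rpow_le_rpow hγ.le hw)
      (fun _ hw => hG.rpow_le_affine_self_rpow hγ.le hw)
  have hBC : IntegrableOn (fun x => h x * (g (v x) ^ (-γ) * deriv g (v x) * v x)) Ω ↔
      IntegrableOn (fun x => h x * g (v x) ^ (1 - γ)) Ω :=
    integrable_mul_comp_iff_of_le_of_le_affine (s := Ioi 0) hh_int hh0 hv_meas hv_pos
      (((hgm.pow_const _).mul (measurable_deriv g)).mul measurable_id) (hgm.pow_const _)
      (fun _ hw => hG.rpow_neg_mul_deriv_mul_nonneg hw)
      (fun _ hw => hG.rpow_neg_mul_deriv_mul_le hw)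
      (fun _ hw => hG.rpow_le_affine_rpow_neg_mul_deriv_mul hγ.le hw)
  simp only [mul_assoc] at hBC ⊢
  exact ⟨hAC.trans hBC.symm, hBC⟩

/-- equivalence of the three integrability conditions for a
positive measurable `v` on the bounded domain `Ω`. -/
theorem stmt_13 (N : ℕ) (hN : 3 ≤ N)
    (Ω : Set (EuclideanSpace ℝ (Fin N))) (hΩo : IsOpen Ω)
    (hΩb : Bornology.IsBounded Ω) (hΩpos : 0 < volume Ω)
    (γ : ℝ) (hγ : 1 < γ)
    (g : ℝ → ℝ) (hg0 : g 0 = 0)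
    (hg : ∀ t : ℝ, HasDerivAt g ((1 + 2 * g t ^ 2) ^ (-(1 / 2) : ℝ)) t)
    (h : EuclideanSpace ℝ (Fin N) → ℝ)
    (hh_int : IntegrableOn h Ω)
    (hh_pos : ∀ᵐ x ∂(volume.restrict Ω), 0 < h x)
    (v : EuclideanSpace ℝ (Fin N) → ℝ)
    (hv_meas : AEMeasurable v (volume.restrict Ω))
    (hv_pos : ∀ᵐ x ∂(volume.restrict Ω), 0 < v x) :
    (IntegrableOn (fun x => h x * v x ^ (1 - γ)) Ω ↔
      IntegrableOn (fun x => h x * g (v x) ^ (-γ) * deriv g (v x) * v x) Ω) ∧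
    (IntegrableOn (fun x => h x * g (v x) ^ (-γ) * deriv g (v x) * v x) Ω ↔
      IntegrableOn (fun x => h x * g (v x) ^ (1 - γ)) Ω) :=
  stmt_13_general N Ω γ hγ g hg0 hg h hh_int hh_pos v hv_meas hv_pos
end

section
/- Let v : Ω → ℝ be measurable with v(x) > 0 for a.e. x ∈ Ω, and assume that x ↦ h(x)·v(x)^(1−γ) is integrable on Ω. Define Γ : (0, ∞) → ℝ by Γ(t) = ∫_Ω h(x)·g(t·v(x))^(1−γ) dx. Then Γ is continuously differentiable on (0, ∞), and for every t > 0 its derivative is Γ'(t) = (1 − γ)·∫_Ω h(x)·g(t·v(x))^(−γ)·g'(t·v(x))·v(x) dx. -/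
/-!
Since `g' = (1 + 2 g²)^(-1/2)` is positive and decreases as `g` grows, `g` is strictly increasing
and concave on `[0, ∞)`. Put `p = 1 - γ ≤ 0`. Concavity and `g 0 = 0` give the secant bound
`u g(1) ≤ g(u)` on `[0, 1]`, hence `g(u)^p ≤ g(1)^p (u^p + 1)` for `u > 0`, and the tangent bound
`u g'(u) ≤ g(u)`, hence `g(s w)^(p-1) g'(s w) w ≤ a⁻¹ g(a w)^p` for `0 < a ≤ s`. The first makes
every integrand `h g(s v)^p` integrable, because `h` and `h v^p` are; the second dominates the
differentiated integrand uniformly for `s ≥ a`, so differentiation under the integral sign and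
continuity of parametric integrals apply.
-/

open MeasureTheory Set Filter Topology

section ConcaveOn

variable {g : ℝ → ℝ}

lemma ConcaveOn.mul_map_one_le (hconc : ConcaveOn ℝ (Ici 0) g) (hg0 : g 0 = 0) {u : ℝ}
    (hu0 : 0 ≤ u) (hu1 : u ≤ 1) : u * g 1 ≤ g u := by
  simpa [hg0] using hconc.2 (mem_Ici.2 zero_le_one) (mem_Ici.2 le_rfl) hu0 (sub_nonneg.2 hu1)
    (add_sub_cancel u 1)

lemma ConcaveOn.mul_deriv_le (hconc : ConcaveOn ℝ (Ici 0) g) (hg0 : g 0 = 0) {u : ℝ}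
    (hu : 0 ≤ u) (hgd : DifferentiableAt ℝ g u) : u * deriv g u ≤ g u := by
  rcases hu.eq_or_lt with rfl | hu
  · simp [hg0]
  have hslope := hconc.deriv_le_slope (mem_Ici.2 le_rfl) (mem_Ici.2 hu.le) hu hgd
  rw [slope_def_field, hg0, sub_zero, sub_zero, le_div_iff₀ hu] at hslope
  linarith

lemma ConcaveOn.rpow_le_mul_rpow_add_one (hconc : ConcaveOn ℝ (Ici 0) g) (hg0 : g 0 = 0)
    (hmono : StrictMono g) {p u : ℝ} (hp : p ≤ 0) (hu : 0 < u) : g u ^ p ≤ g 1 ^ p * (u ^ p + 1) := by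
  have hg1 : 0 < g 1 := hg0 ▸ hmono one_pos
  have hup : 0 < u ^ p := Real.rpow_pos_of_pos hu p
  have hg1p : 0 < g 1 ^ p := Real.rpow_pos_of_pos hg1 p
  rcases le_or_gt u 1 with hu1 | hu1
  · calc g u ^ p ≤ (u * g 1) ^ p :=
          Real.rpow_le_rpow_of_nonpos (by positivity) (hconc.mul_map_one_le hg0 hu.le hu1) hp
      _ = g 1 ^ p * u ^ p := by rw [Real.mul_rpow hu.le hg1.le, mul_comm]
      _ ≤ g 1 ^ p * (u ^ p + 1) := by gcongr; linarith
  · calc g u ^ p ≤ g 1 ^ p := Real.rpow_le_rpow_of_nonpos hg1 (hmono hu1).le hp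
      _ ≤ g 1 ^ p * (u ^ p + 1) := le_mul_of_one_le_right hg1p.le (by linarith)

lemma ConcaveOn.rpow_sub_one_mul_deriv_mul_le (hconc : ConcaveOn ℝ (Ici 0) g) (hg0 : g 0 = 0)
    (hmono : StrictMono g) (hgd : Differentiable ℝ g) {p a s w : ℝ} (hp : p ≤ 0) (ha : 0 < a)
    (has : a ≤ s) (hw : 0 < w) :
    g (s * w) ^ (p - 1) * deriv g (s * w) * w ≤ a⁻¹ * g (a * w) ^ p := by
  have hs : 0 < s := ha.trans_le has
  have hgaw : 0 < g (a * w) := hg0 ▸ hmono (by positivity)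
  have hgsw : 0 < g (s * w) := hg0 ▸ hmono (by positivity)
  calc g (s * w) ^ (p - 1) * deriv g (s * w) * w
      = s⁻¹ * (g (s * w) ^ (p - 1) * (s * w * deriv g (s * w))) := by field_simp
    _ ≤ s⁻¹ * (g (s * w) ^ (p - 1) * g (s * w)) := by
        gcongr
        exact hconc.mul_deriv_le hg0 (by positivity) (hgd _)
    _ = s⁻¹ * g (s * w) ^ p := by rw [Real.rpow_sub_one hgsw.ne', div_mul_cancel₀ _ hgsw.ne']
    _ ≤ a⁻¹ * g (a * w) ^ p :=
        mul_le_mul (inv_anti₀ ha has)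
          (Real.rpow_le_rpow_of_nonpos hgaw (hmono.monotone (by gcongr)) hp)
          (by positivity) (by positivity)

end ConcaveOn

section ParametricIntegral

variable {α : Type*} [MeasurableSpace α] {μ : Measure α} {g : ℝ → ℝ} {h v : α → ℝ}

lemma integrable_mul_rpow_comp_mul (hconc : ConcaveOn ℝ (Ici 0) g) (hg0 : g 0 = 0)
    (hmono : StrictMono g) (hgc : Continuous g) {p : ℝ} (hp : p ≤ 0) (hh : Integrable h μ)
    (hv_meas : AEMeasurable v μ) (hv_pos : ∀ᵐ x ∂μ, 0 < v x)
    (hv_int : Integrable (fun x => h x * v x ^ p) μ) {s : ℝ} (hs : 0 < s) :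
    Integrable (fun x => h x * g (s * v x) ^ p) μ := by
  refine Integrable.mono' ((hv_int.norm.const_mul (s ^ p)).add hh.norm |>.const_mul (g 1 ^ p))
    (hh.aestronglyMeasurable.mul
      ((hgc.measurable.comp_aemeasurable (hv_meas.const_mul s)).pow_const p).aestronglyMeasurable)
    ?_
  filter_upwards [hv_pos] with x hx
  have hsx : 0 < s * v x := by positivity
  have hgsx : 0 < g (s * v x) := hg0 ▸ hmono hsx
  simp only [Pi.add_apply, norm_mul, Real.norm_eq_abs, abs_of_pos (Real.rpow_pos_of_pos hgsx p),
    abs_of_pos (Real.rpow_pos_of_pos hx p)]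
  calc |h x| * g (s * v x) ^ p ≤ |h x| * (g 1 ^ p * ((s * v x) ^ p + 1)) := by
        gcongr
        exact hconc.rpow_le_mul_rpow_add_one hg0 hmono hp hsx
    _ = g 1 ^ p * (s ^ p * (|h x| * v x ^ p) + |h x|) := by
        rw [Real.mul_rpow hs.le hx.le]
        ring

lemma aestronglyMeasurable_mul_rpow_comp_mul_deriv_mul (hg : ContDiff ℝ 1 g) (p : ℝ)
    (hh : AEStronglyMeasurable h μ) (hv_meas : AEMeasurable v μ) (s : ℝ) :
    AEStronglyMeasurable (fun x => h x * g (s * v x) ^ p * deriv g (s * v x) * v x) μ :=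
  ((hh.mul
    ((hg.continuous.measurable.comp_aemeasurable (hv_meas.const_mul s)).pow_const
      p).aestronglyMeasurable).mul
    ((hg.continuous_deriv_one.measurable.comp_aemeasurable
      (hv_meas.const_mul s)).aestronglyMeasurable)).mul hv_meas.aestronglyMeasurable

lemma ae_norm_mul_rpow_comp_mul_deriv_mul_le (hconc : ConcaveOn ℝ (Ici 0) g) (hg0 : g 0 = 0)
    (hmono : StrictMono g) (hgd : Differentiable ℝ g) {p : ℝ} (hp : p ≤ 0)
    (hv_pos : ∀ᵐ x ∂μ, 0 < v x) {a : ℝ} (ha : 0 < a) :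
    ∀ᵐ x ∂μ, ∀ s, a ≤ s →
      ‖h x * g (s * v x) ^ (p - 1) * deriv g (s * v x) * v x‖
        ≤ a⁻¹ * ‖h x * g (a * v x) ^ p‖ := by
  filter_upwards [hv_pos] with x hx s has
  have hgsx : 0 < g (s * v x) := hg0 ▸ hmono (mul_pos (ha.trans_le has) hx)
  have hgax : 0 < g (a * v x) := hg0 ▸ hmono (by positivity)
  have hderiv : 0 ≤ deriv g (s * v x) := hmono.monotone.deriv_nonneg
  calc ‖h x * g (s * v x) ^ (p - 1) * deriv g (s * v x) * v x‖
      = ‖h x‖ * (g (s * v x) ^ (p - 1) * deriv g (s * v x) * v x) := by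
        have hnonneg : 0 ≤ g (s * v x) ^ (p - 1) * deriv g (s * v x) * v x := by positivity
        rw [mul_assoc, mul_assoc, ← mul_assoc (g _ ^ _), norm_mul, Real.norm_of_nonneg hnonneg]
    _ ≤ ‖h x‖ * (a⁻¹ * g (a * v x) ^ p) := mul_le_mul_of_nonneg_left
        (hconc.rpow_sub_one_mul_deriv_mul_le hg0 hmono hgd hp ha has hx) (norm_nonneg _)
    _ = a⁻¹ * ‖h x * g (a * v x) ^ p‖ := by
        rw [norm_mul, Real.norm_of_nonneg (Real.rpow_pos_of_pos hgax p).le]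
        ring

theorem hasDerivAt_integral_mul_rpow_comp_mul (hg : ContDiff ℝ 1 g)
    (hconc : ConcaveOn ℝ (Ici 0) g) (hg0 : g 0 = 0) (hmono : StrictMono g) {p : ℝ} (hp : p ≤ 0)
    (hh : Integrable h μ) (hv_meas : AEMeasurable v μ) (hv_pos : ∀ᵐ x ∂μ, 0 < v x)
    (hv_int : Integrable (fun x => h x * v x ^ p) μ) {t : ℝ} (ht : 0 < t) :
    HasDerivAt (fun s => ∫ x, h x * g (s * v x) ^ p ∂μ)
      (p * ∫ x, h x * g (t * v x) ^ (p - 1) * deriv g (t * v x) * v x ∂μ) t := by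
  have hgd : Differentiable ℝ g := hg.differentiable one_ne_zero
  have ht2 : 0 < t / 2 := half_pos ht
  have hint (s : ℝ) (hs : 0 < s) : Integrable (fun x => h x * g (s * v x) ^ p) μ :=
    integrable_mul_rpow_comp_mul hconc hg0 hmono hg.continuous hp hh hv_meas hv_pos hv_int hs
  have hdom := ae_norm_mul_rpow_comp_mul_deriv_mul_le (h := h) hconc hg0 hmono hgd hp hv_pos ht2
  have hbound : ∀ᵐ x ∂μ, ∀ s ∈ Ioi (t / 2),
      ‖p * (h x * g (s * v x) ^ (p - 1) * deriv g (s * v x) * v x)‖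
        ≤ |p| * ((t / 2)⁻¹ * ‖h x * g (t / 2 * v x) ^ p‖) := by
    filter_upwards [hdom] with x hx s hs
    rw [norm_mul, Real.norm_eq_abs]
    exact mul_le_mul_of_nonneg_left (hx s (le_of_lt hs)) (abs_nonneg p)
  have hderiv : ∀ᵐ x ∂μ, ∀ s ∈ Ioi (t / 2), HasDerivAt (fun s => h x * g (s * v x) ^ p)
      (p * (h x * g (s * v x) ^ (p - 1) * deriv g (s * v x) * v x)) s := by
    filter_upwards [hv_pos] with x hx s hs
    have hgsx : 0 < g (s * v x) := hg0 ▸ hmono (mul_pos (ht2.trans hs) hx)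
    exact ((((hgd _).hasDerivAt.comp s (hasDerivAt_mul_const (v x))).rpow_const
      (p := p) (Or.inl hgsx.ne')).const_mul (h x)).congr_deriv
        (by rw [Function.comp_apply]; ring)
  obtain ⟨-, hd⟩ := hasDerivAt_integral_of_dominated_loc_of_deriv_le
    (Ioi_mem_nhds (half_lt_self ht))
    ((eventually_gt_nhds ht).mono fun s hs => (hint s hs).aestronglyMeasurable) (hint t ht)
    ((aestronglyMeasurable_mul_rpow_comp_mul_deriv_mul hg (p - 1) hh.aestronglyMeasurable hv_meas
      t).const_mul p)
    hbound (((hint _ ht2).norm.const_mul _).const_mul _) hderiv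
  simpa only [integral_const_mul] using hd

theorem continuousOn_integral_mul_rpow_comp_mul_deriv_mul (hg : ContDiff ℝ 1 g)
    (hconc : ConcaveOn ℝ (Ici 0) g) (hg0 : g 0 = 0) (hmono : StrictMono g) {p : ℝ} (hp : p ≤ 0)
    (hh : Integrable h μ) (hv_meas : AEMeasurable v μ) (hv_pos : ∀ᵐ x ∂μ, 0 < v x)
    (hv_int : Integrable (fun x => h x * v x ^ p) μ) :
    ContinuousOn (fun t => ∫ x, h x * g (t * v x) ^ (p - 1) * deriv g (t * v x) * v x ∂μ)
      (Ioi 0) := by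
  intro t ht
  have ht2 : 0 < t / 2 := half_pos ht
  have hdom := ae_norm_mul_rpow_comp_mul_deriv_mul_le (h := h) hconc hg0 hmono
    (hg.differentiable one_ne_zero) hp hv_pos ht2
  refine (continuousAt_of_dominated (bound := fun x => (t / 2)⁻¹ * ‖h x * g (t / 2 * v x) ^ p‖)
    (Eventually.of_forall
      (aestronglyMeasurable_mul_rpow_comp_mul_deriv_mul hg _ hh.aestronglyMeasurable hv_meas))
    ?_ ((integrable_mul_rpow_comp_mul hconc hg0 hmono hg.continuous hp hh hv_meas hv_pos hv_int
      ht2).norm.const_mul _) ?_).continuousWithinAt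
  · filter_upwards [Ioi_mem_nhds (half_lt_self ht)] with s hs
    filter_upwards [hdom] with x hx using hx s (le_of_lt hs)
  · filter_upwards [hv_pos] with x hx
    have hgtx : 0 < g (t * v x) := hg0 ▸ hmono (mul_pos ht hx)
    have hcomp : Continuous fun s : ℝ => s * v x := continuous_id.mul continuous_const
    exact ((continuousAt_const.mul ((hg.continuous.comp hcomp).continuousAt.rpow_const
      (Or.inl hgtx.ne'))).mul (hg.continuous_deriv_one.comp hcomp).continuousAt).mul
      continuousAt_const

end ParametricIntegral

section InversePrimitive

variable {g : ℝ → ℝ}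

lemma strictMono_of_hasDerivAt_rpow_neg_half
    (hg : ∀ t : ℝ, HasDerivAt g ((1 + 2 * g t ^ 2) ^ (-(1 / 2) : ℝ)) t) : StrictMono g :=
  strictMono_of_hasDerivAt_pos hg fun _ => Real.rpow_pos_of_pos (by positivity) _

lemma contDiff_one_of_hasDerivAt_rpow_neg_half
    (hg : ∀ t : ℝ, HasDerivAt g ((1 + 2 * g t ^ 2) ^ (-(1 / 2) : ℝ)) t) : ContDiff ℝ 1 g := by
  have hcont : Continuous g := continuous_iff_continuousAt.2 fun t => (hg t).continuousAt
  rw [contDiff_one_iff_deriv, funext fun t => (hg t).deriv]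
  exact ⟨fun t => (hg t).differentiableAt,
    (by fun_prop : Continuous fun t => 1 + 2 * g t ^ 2).rpow_const fun _ => Or.inl (by positivity)⟩

lemma concaveOn_Ici_of_hasDerivAt_rpow_neg_half (hg0 : g 0 = 0)
    (hg : ∀ t : ℝ, HasDerivAt g ((1 + 2 * g t ^ 2) ^ (-(1 / 2) : ℝ)) t) :
    ConcaveOn ℝ (Ici 0) g := by
  have hmono := strictMono_of_hasDerivAt_rpow_neg_half hg
  refine AntitoneOn.concaveOn_of_deriv (convex_Ici 0)
    (contDiff_one_of_hasDerivAt_rpow_neg_half hg).continuous.continuousOn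
    (fun t _ => (hg t).differentiableAt.differentiableWithinAt) ?_
  rw [interior_Ici]
  intro x hx y _ hxy
  rw [(hg x).deriv, (hg y).deriv]
  have hgx : 0 ≤ g x := hg0 ▸ hmono.monotone (le_of_lt hx)
  have hsq : g x ^ 2 ≤ g y ^ 2 := pow_le_pow_left₀ hgx (hmono.monotone hxy) 2
  exact Real.rpow_le_rpow_of_nonpos (by positivity) (by linarith) (by norm_num)

end InversePrimitive

theorem stmt_14_general (N : ℕ)
    (Ω : Set (EuclideanSpace ℝ (Fin N)))
    (γ : ℝ) (hγ : 1 < γ)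
    (g : ℝ → ℝ) (hg0 : g 0 = 0)
    (hg : ∀ t : ℝ, HasDerivAt g ((1 + 2 * g t ^ 2) ^ (-(1 / 2) : ℝ)) t)
    (h : EuclideanSpace ℝ (Fin N) → ℝ)
    (hh_int : IntegrableOn h Ω)
    (v : EuclideanSpace ℝ (Fin N) → ℝ)
    (hv_meas : AEMeasurable v (volume.restrict Ω))
    (hv_pos : ∀ᵐ x ∂(volume.restrict Ω), 0 < v x)
    (hv_int : IntegrableOn (fun x => h x * v x ^ (1 - γ)) Ω) :
    (∀ t : ℝ, 0 < t →
      HasDerivAt (fun s : ℝ => ∫ x in Ω, h x * g (s * v x) ^ (1 - γ))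
        ((1 - γ) * ∫ x in Ω, h x * g (t * v x) ^ (-γ) * deriv g (t * v x) * v x)
        t) ∧
    ContinuousOn
      (fun t : ℝ =>
        (1 - γ) * ∫ x in Ω, h x * g (t * v x) ^ (-γ) * deriv g (t * v x) * v x)
      (Set.Ioi (0 : ℝ)) := by
  have hC1 := contDiff_one_of_hasDerivAt_rpow_neg_half hg
  have hconc := concaveOn_Ici_of_hasDerivAt_rpow_neg_half hg0 hg
  have hmono := strictMono_of_hasDerivAt_rpow_neg_half hg
  have hp : 1 - γ ≤ 0 := by linarith
  rw [show -γ = 1 - γ - 1 by ring]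
  exact ⟨fun t ht => hasDerivAt_integral_mul_rpow_comp_mul hC1 hconc hg0 hmono hp hh_int hv_meas
      hv_pos hv_int ht,
    continuousOn_const.mul (continuousOn_integral_mul_rpow_comp_mul_deriv_mul hC1 hconc hg0 hmono
      hp hh_int hv_meas hv_pos hv_int)⟩

/-- the map `Γ(t) = ∫_Ω h(x) g(t v(x))^(1−γ) dx` is `C¹` on
`(0,∞)` with `Γ'(t) = (1−γ) ∫_Ω h(x) g(t v(x))^(−γ) g'(t v(x)) v(x) dx`. -/
theorem stmt_14 (N : ℕ) (hN : 3 ≤ N)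
    (Ω : Set (EuclideanSpace ℝ (Fin N))) (hΩo : IsOpen Ω)
    (hΩb : Bornology.IsBounded Ω) (hΩpos : 0 < volume Ω)
    (γ : ℝ) (hγ : 1 < γ)
    (g : ℝ → ℝ) (hg0 : g 0 = 0)
    (hg : ∀ t : ℝ, HasDerivAt g ((1 + 2 * g t ^ 2) ^ (-(1 / 2) : ℝ)) t)
    (h : EuclideanSpace ℝ (Fin N) → ℝ)
    (hh_int : IntegrableOn h Ω)
    (hh_pos : ∀ᵐ x ∂(volume.restrict Ω), 0 < h x)
    (v : EuclideanSpace ℝ (Fin N) → ℝ)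
    (hv_meas : AEMeasurable v (volume.restrict Ω))
    (hv_pos : ∀ᵐ x ∂(volume.restrict Ω), 0 < v x)
    (hv_int : IntegrableOn (fun x => h x * v x ^ (1 - γ)) Ω) :
    (∀ t : ℝ, 0 < t →
      HasDerivAt (fun s : ℝ => ∫ x in Ω, h x * g (s * v x) ^ (1 - γ))
        ((1 - γ) * ∫ x in Ω, h x * g (t * v x) ^ (-γ) * deriv g (t * v x) * v x)
        t) ∧
    ContinuousOn
      (fun t : ℝ =>
        (1 - γ) * ∫ x in Ω, h x * g (t * v x) ^ (-γ) * deriv g (t * v x) * v x)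
      (Set.Ioi (0 : ℝ)) :=
  stmt_14_general N Ω γ hγ g hg0 hg h hh_int v hv_meas hv_pos hv_int
end

section
/- Let p ∈ (0,1), let b : Ω → ℝ be essentially bounded and measurable, let a > 0 be real, and let v : Ω → ℝ be measurable with v(x) > 0 for a.e. x ∈ Ω, such that x ↦ |v(x)|^(p+1) is integrable and x ↦ h(x)·v(x)^(1−γ) is integrable on Ω. Define φ : (0, ∞) → ℝ by φ(t) = (a/2)·t² + (1/(γ−1))·∫_Ω h(x)·g(t·v(x))^(1−γ) dx − (1/(p+1))·∫_Ω b(x)·g(t·v(x))^(p+1) dx. Then φ(t) → +∞ as t → 0⁺, φ(t) → +∞ as t → +∞, and there exists t₀ > 0 with φ(t₀) = inf{ φ(t) : t > 0 }. -/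
/-!
For `s > 0` the change of variables satisfies `3 ^ (-1/2) * min s 1 ≤ g s ≤ s`. Hence the
singular term `∫ h g(tv)^(1-γ)` is finite, continuous in `t > 0` and at least
`t^(1-γ) ∫ h v^(1-γ) > 0`, while the `b`-term is `O(t^(p+1))`. So
`φ t ≥ (a/2) t² + c t^(1-γ) - D t^(p+1)` with `c > 0`; since `1 - γ < 0 < p + 1 < 2`, the right
side blows up at `0⁺` and at `+∞`, and a continuous function on `(0, ∞)` that blows up at both
ends attains its infimum.
-/

open MeasureTheory Filter Set Topology

theorem exists_isMinOn_Ioi_of_tendsto_atTop {f : ℝ → ℝ} {a : ℝ} (hf : ContinuousOn f (Ioi a))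
    (hleft : Tendsto f (𝓝[>] a) atTop) (hright : Tendsto f atTop atTop) :
    ∃ x ∈ Ioi a, IsMinOn f (Ioi a) x := by
  obtain ⟨u, hu, hleft'⟩ :=
    mem_nhdsGT_iff_exists_Ioo_subset.1 (hleft.eventually_gt_atTop (f (a + 1)))
  obtain ⟨M, hM⟩ := eventually_atTop.1 (hright.eventually_gt_atTop (f (a + 1)))
  obtain ⟨l, hal, hlu⟩ := exists_between (show a < u from hu)
  -- `a + 1` cannot lie in `Ioo a u`, where `f > f (a + 1)`.
  have hl : l ≤ a + 1 := by
    by_contra! hl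
    exact lt_irrefl (f (a + 1)) (hleft' ⟨by linarith, hlu.trans' hl⟩)
  obtain ⟨x, hx, hmin⟩ := isCompact_Icc.exists_isMinOn
    (nonempty_Icc.2 (hl.trans (le_max_right M (a + 1)))) (hf.mono fun t ht => hal.trans_le ht.1)
  have hx1 : f x ≤ f (a + 1) := hmin ⟨hl, le_max_right _ _⟩
  refine ⟨x, hal.trans_le hx.1, fun t (ht : a < t) => ?_⟩
  rcases lt_or_ge t l with htl | htl
  · exact hx1.trans (hleft' ⟨ht, htl.trans hlu⟩).le
  rcases le_or_gt t (max M (a + 1)) with htM | htM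
  · exact hmin ⟨htl, htM⟩
  · exact hx1.trans (hM t ((le_max_left _ _).trans htM.le)).le

theorem tendsto_nhdsGT_zero_atTop_of_rpow_le {f : ℝ → ℝ} {a c e D q : ℝ} (ha : 0 ≤ a)
    (hc : 0 < c) (he : e < 0) (hq : 0 < q)
    (hf : ∀ t, 0 < t → a * t ^ 2 + c * t ^ e - D * t ^ q ≤ f t) :
    Tendsto f (𝓝[>] 0) atTop := by
  have hpow : Tendsto (fun t : ℝ => t ^ q) (𝓝[>] 0) (𝓝 0) := by
    simpa [Real.zero_rpow hq.ne'] using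
      ((Real.continuousAt_rpow_const 0 q (Or.inr hq.le)).tendsto).mono_left nhdsWithin_le_nhds
  have hlow : Tendsto (fun t : ℝ => c * t ^ e - D * t ^ q) (𝓝[>] 0) atTop := by
    simpa [sub_eq_add_neg] using
      ((tendsto_rpow_neg_nhdsGT_zero he).const_mul_atTop hc).atTop_add (hpow.const_mul D).neg
  refine tendsto_atTop_mono' _ ?_ hlow
  filter_upwards [self_mem_nhdsWithin] with t (ht : 0 < t)
  linarith [hf t ht, mul_nonneg ha (sq_nonneg t)]

theorem tendsto_atTop_atTop_of_rpow_le {f : ℝ → ℝ} {a c e D q : ℝ} (ha : 0 < a)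
    (hc : 0 ≤ c) (hq : q < 2) (hf : ∀ t, 0 < t → a * t ^ 2 + c * t ^ e - D * t ^ q ≤ f t) :
    Tendsto f atTop atTop := by
  have hlow : Tendsto (fun t : ℝ => t ^ 2 * (a - D * t ^ (q - 2))) atTop atTop := by
    refine (tendsto_pow_atTop two_ne_zero).atTop_mul_pos ha ?_
    simpa using ((tendsto_rpow_neg_atTop (by linarith : 0 < 2 - q)).const_mul D).const_sub a
  refine tendsto_atTop_mono' _ ?_ hlow
  filter_upwards [eventually_gt_atTop 0] with t ht
  have hsplit : t ^ q = t ^ 2 * t ^ (q - 2) := by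
    rw [← Real.rpow_natCast, ← Real.rpow_add ht]; norm_num
  calc t ^ 2 * (a - D * t ^ (q - 2)) = a * t ^ 2 - D * t ^ q := by rw [hsplit]; ring
    _ ≤ f t := by linarith [hf t ht, mul_nonneg hc (Real.rpow_nonneg ht.le e)]

section

variable {α : Type*} [MeasurableSpace α] {μ : Measure α}

theorem MeasureTheory.MemLp.exists_ae_abs_le {b : α → ℝ} (hb : MemLp b ⊤ μ) :
    ∃ C, ∀ᵐ x ∂μ, |b x| ≤ C := by
  have hfin : eLpNormEssSup b μ < ⊤ := by simpa using hb.eLpNorm_lt_top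
  obtain ⟨C, hC⟩ := eLpNormEssSup_lt_top_iff_isBoundedUnder.1 hfin
  exact ⟨C, (eventually_map.1 hC).mono fun x hx => by
    simpa [← Real.norm_eq_abs] using NNReal.coe_le_coe.2 hx⟩

theorem MeasureTheory.integral_pos_of_ae_pos {f : α → ℝ} (hμ : μ ≠ 0)
    (hf : ∀ᵐ x ∂μ, 0 < f x) (hfi : Integrable f μ) : 0 < ∫ x, f x ∂μ := by
  rw [integral_pos_iff_support_of_nonneg_ae (hf.mono fun _ hx => hx.le) hfi]
  have hsupp : Function.support f =ᵐ[μ] univ :=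
    ae_eq_univ.2 (measure_mono_null (fun x hx hfx => hx (ne_of_gt hfx)) (ae_iff.1 hf))
  rwa [measure_congr hsupp, Measure.measure_univ_pos]

theorem Continuous.aemeasurable_comp_const_mul_rpow {g : ℝ → ℝ} (hg : Continuous g)
    {v : α → ℝ} (hv : AEMeasurable v μ) (t e : ℝ) : AEMeasurable (fun x => g (t * v x) ^ e) μ :=
  (hg.measurable.comp_aemeasurable (hv.const_mul t)).pow_const e

theorem Continuous.continuousAt_comp_mul_const_rpow {g : ℝ → ℝ} (hg : Continuous g)
    {s t e : ℝ} (hne : g (t * s) ≠ 0 ∨ 0 ≤ e) : ContinuousAt (fun t => g (t * s) ^ e) t :=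
  (hg.comp (continuous_id.mul continuous_const)).continuousAt.rpow_const hne

end

def HasDualChangeDeriv (g : ℝ → ℝ) : Prop :=
  ∀ t, HasDerivAt g ((1 + 2 * g t ^ 2) ^ (-(1 / 2) : ℝ)) t

namespace HasDualChangeDeriv

variable {α : Type*} [MeasurableSpace α] {μ : Measure α} {g : ℝ → ℝ} {h b v : α → ℝ}

theorem continuous (hg : HasDualChangeDeriv g) : Continuous g :=
  Differentiable.continuous fun t => (hg t).differentiableAt

theorem strictMono (hg : HasDualChangeDeriv g) : StrictMono g :=
  strictMono_of_hasDerivAt_pos hg fun _ => Real.rpow_pos_of_pos (by positivity) _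

theorem pos (hg : HasDualChangeDeriv g) (hg0 : g 0 = 0) {s : ℝ} (hs : 0 < s) : 0 < g s :=
  hg0 ▸ hg.strictMono hs

theorem nonneg (hg : HasDualChangeDeriv g) (hg0 : g 0 = 0) {s : ℝ} (hs : 0 ≤ s) : 0 ≤ g s :=
  hg0 ▸ hg.strictMono.monotone hs

theorem le_self (hg : HasDualChangeDeriv g) (hg0 : g 0 = 0) {s : ℝ} (hs : 0 ≤ s) : g s ≤ s := by
  have hderiv_le (t : ℝ) : deriv g t ≤ 1 := by
    rw [(hg t).deriv]
    exact Real.rpow_le_one_of_one_le_of_nonpos (by nlinarith [sq_nonneg (g t)]) (by norm_num)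
  simpa [hg0] using
    image_sub_le_mul_sub_of_deriv_le (fun t => (hg t).differentiableAt) hderiv_le hs

/-- On `[0, 1]` we have `0 ≤ g ≤ 1`, so `g' = (1 + 2 g²) ^ (-1/2) ≥ 3 ^ (-1/2)` there. -/
theorem mul_min_le (hg : HasDualChangeDeriv g) (hg0 : g 0 = 0) {s : ℝ} (hs : 0 ≤ s) :
    (3 : ℝ) ^ (-(1 / 2) : ℝ) * min s 1 ≤ g s := by
  have hslope : ∀ t ∈ interior (Icc (0 : ℝ) 1), (3 : ℝ) ^ (-(1 / 2) : ℝ) ≤ deriv g t := by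
    intro t ht
    rw [interior_Icc] at ht
    have hgt : g t ^ 2 ≤ 1 :=
      pow_le_one₀ (hg.nonneg hg0 ht.1.le) ((hg.le_self hg0 ht.1.le).trans ht.2.le)
    rw [(hg t).deriv]
    exact Real.rpow_le_rpow_of_nonpos (by positivity) (by linarith) (by norm_num)
  have hlin : ∀ s ∈ Icc (0 : ℝ) 1, (3 : ℝ) ^ (-(1 / 2) : ℝ) * s ≤ g s := by
    intro s hs
    simpa [hg0] using (convex_Icc 0 1).mul_sub_le_image_sub_of_le_deriv
      hg.continuous.continuousOn (fun t _ => (hg t).differentiableAt.differentiableWithinAt)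
      hslope 0 (left_mem_Icc.2 zero_le_one) s hs hs.1
  rcases le_total s 1 with hs1 | hs1
  · rw [min_eq_left hs1]
    exact hlin s ⟨hs, hs1⟩
  · rw [min_eq_right hs1]
    exact (hlin 1 (right_mem_Icc.2 zero_le_one)).trans (hg.strictMono.monotone hs1)

theorem exists_rpow_le (hg : HasDualChangeDeriv g) (hg0 : g 0 = 0) {e : ℝ} (he : e ≤ 0) :
    ∃ C, ∀ s, 0 < s → g s ^ e ≤ C * (s ^ e + 1) := by
  set c : ℝ := (3 : ℝ) ^ (-(1 / 2) : ℝ)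
  refine ⟨c ^ e, fun s hs => ?_⟩
  have hmin : 0 < min s 1 := lt_min hs one_pos
  calc g s ^ e ≤ (c * min s 1) ^ e :=
        Real.rpow_le_rpow_of_nonpos (by positivity) (hg.mul_min_le hg0 hs.le) he
    _ = c ^ e * min s 1 ^ e := Real.mul_rpow (by positivity) hmin.le
    _ ≤ c ^ e * (s ^ e + 1) := by
        gcongr
        rcases le_total s 1 with hs1 | hs1
        · rw [min_eq_left hs1]; linarith [Real.rpow_nonneg hs.le e]
        · rw [min_eq_right hs1, Real.one_rpow]; linarith [Real.rpow_nonneg hs.le e]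

theorem abs_mul_rpow_le (hg : HasDualChangeDeriv g) (hg0 : g 0 = 0) {β C s q : ℝ}
    (hβ : |β| ≤ C) (hs : 0 ≤ s) (hq : 0 ≤ q) : |β * g s ^ q| ≤ C * s ^ q := by
  have hgs := hg.nonneg hg0 hs
  rw [abs_mul, abs_of_nonneg (Real.rpow_nonneg hgs q)]
  exact mul_le_mul hβ (Real.rpow_le_rpow hgs (hg.le_self hg0 hs) hq) (Real.rpow_nonneg hgs q)
    ((abs_nonneg β).trans hβ)

theorem integrable_mul_rpow_comp_mul (hg : HasDualChangeDeriv g) (hg0 : g 0 = 0) {e : ℝ}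
    (he : e ≤ 0) (hh : Integrable h μ) (hh_nn : ∀ᵐ x ∂μ, 0 ≤ h x) (hv : AEMeasurable v μ)
    (hv_pos : ∀ᵐ x ∂μ, 0 < v x) (hhv : Integrable (fun x => h x * v x ^ e) μ) {t : ℝ}
    (ht : 0 < t) : Integrable (fun x => h x * g (t * v x) ^ e) μ := by
  obtain ⟨C, hC⟩ := hg.exists_rpow_le hg0 he
  refine (((hhv.const_mul (t ^ e)).add hh).const_mul C).mono'
    (hh.1.mul (hg.continuous.aemeasurable_comp_const_mul_rpow hv t e).aestronglyMeasurable) ?_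
  filter_upwards [hh_nn, hv_pos] with x hx hvx
  have htv := mul_pos ht hvx
  rw [Real.norm_of_nonneg (mul_nonneg hx (Real.rpow_nonneg (hg.nonneg hg0 htv.le) _))]
  calc h x * g (t * v x) ^ e ≤ h x * (C * ((t * v x) ^ e + 1)) :=
        mul_le_mul_of_nonneg_left (hC _ htv) hx
    _ = C * (t ^ e * (h x * v x ^ e) + h x) := by rw [Real.mul_rpow ht.le hvx.le]; ring

theorem mul_integral_le_integral_mul_rpow_comp_mul (hg : HasDualChangeDeriv g) (hg0 : g 0 = 0)
    {e : ℝ} (he : e ≤ 0) (hh_nn : ∀ᵐ x ∂μ, 0 ≤ h x) (hv_pos : ∀ᵐ x ∂μ, 0 < v x)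
    (hhv : Integrable (fun x => h x * v x ^ e) μ) {t : ℝ} (ht : 0 < t)
    (hI : Integrable (fun x => h x * g (t * v x) ^ e) μ) :
    t ^ e * ∫ x, h x * v x ^ e ∂μ ≤ ∫ x, h x * g (t * v x) ^ e ∂μ := by
  rw [← integral_const_mul]
  refine integral_mono_ae (hhv.const_mul _) hI ?_
  filter_upwards [hh_nn, hv_pos] with x hx hvx
  have htv := mul_pos ht hvx
  calc t ^ e * (h x * v x ^ e) = h x * (t * v x) ^ e := by rw [Real.mul_rpow ht.le hvx.le]; ring
    _ ≤ h x * g (t * v x) ^ e := mul_le_mul_of_nonneg_left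
        (Real.rpow_le_rpow_of_nonpos (hg.pos hg0 htv) (hg.le_self hg0 htv.le) he) hx

/-- For `e ≤ 0` the integrand decreases in `t`, so its value at `t₀ / 2` dominates it near `t₀`. -/
theorem continuousOn_integral_mul_rpow_comp_mul_of_nonpos (hg : HasDualChangeDeriv g)
    (hg0 : g 0 = 0) {e : ℝ} (he : e ≤ 0) (hh : Integrable h μ) (hh_nn : ∀ᵐ x ∂μ, 0 ≤ h x)
    (hv : AEMeasurable v μ) (hv_pos : ∀ᵐ x ∂μ, 0 < v x)
    (hhv : Integrable (fun x => h x * v x ^ e) μ) :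
    ContinuousOn (fun t => ∫ x, h x * g (t * v x) ^ e ∂μ) (Ioi 0) := by
  intro t₀ (ht₀ : 0 < t₀)
  refine (continuousAt_of_dominated (F := fun t x => h x * g (t * v x) ^ e)
    (bound := fun x => h x * g (t₀ / 2 * v x) ^ e)
    (Eventually.of_forall fun t =>
      hh.1.mul (hg.continuous.aemeasurable_comp_const_mul_rpow hv t e).aestronglyMeasurable) ?_
    (hg.integrable_mul_rpow_comp_mul hg0 he hh hh_nn hv hv_pos hhv (half_pos ht₀)) ?_
    ).continuousWithinAt
  · filter_upwards [Ioi_mem_nhds (half_lt_self ht₀)] with t (ht : t₀ / 2 < t)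
    filter_upwards [hh_nn, hv_pos] with x hx hvx
    have hlow := hg.pos hg0 (mul_pos (half_pos ht₀) hvx)
    have hmono : g (t₀ / 2 * v x) ≤ g (t * v x) := hg.strictMono.monotone (by gcongr)
    rw [Real.norm_of_nonneg (mul_nonneg hx (Real.rpow_nonneg (hlow.le.trans hmono) _))]
    exact mul_le_mul_of_nonneg_left (Real.rpow_le_rpow_of_nonpos hlow hmono he) hx
  · filter_upwards [hv_pos] with x hvx
    exact continuousAt_const.mul (hg.continuous.continuousAt_comp_mul_const_rpow
      (Or.inl (hg.pos hg0 (mul_pos ht₀ hvx)).ne'))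

theorem abs_integral_mul_rpow_comp_mul_le (hg : HasDualChangeDeriv g) (hg0 : g 0 = 0)
    {q C : ℝ} (hq : 0 ≤ q) (hb : ∀ᵐ x ∂μ, |b x| ≤ C) (hv_nn : ∀ᵐ x ∂μ, 0 ≤ v x)
    (hvq : Integrable (fun x => |v x| ^ q) μ) {t : ℝ} (ht : 0 ≤ t) :
    |∫ x, b x * g (t * v x) ^ q ∂μ| ≤ C * t ^ q * ∫ x, |v x| ^ q ∂μ := by
  rw [← integral_const_mul, ← Real.norm_eq_abs]
  refine norm_integral_le_of_norm_le (hvq.const_mul _) ?_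
  filter_upwards [hb, hv_nn] with x hbx hvx
  calc |b x * g (t * v x) ^ q| ≤ C * (t * v x) ^ q :=
        hg.abs_mul_rpow_le hg0 hbx (mul_nonneg ht hvx) hq
    _ = C * t ^ q * |v x| ^ q := by rw [abs_of_nonneg hvx, Real.mul_rpow ht hvx]; ring

theorem continuousOn_integral_mul_rpow_comp_mul_of_nonneg (hg : HasDualChangeDeriv g)
    (hg0 : g 0 = 0) {q C : ℝ} (hq : 0 ≤ q) (hbm : AEStronglyMeasurable b μ)
    (hb : ∀ᵐ x ∂μ, |b x| ≤ C) (hv : AEMeasurable v μ) (hv_nn : ∀ᵐ x ∂μ, 0 ≤ v x)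
    (hvq : Integrable (fun x => |v x| ^ q) μ) :
    ContinuousOn (fun t => ∫ x, b x * g (t * v x) ^ q ∂μ) (Ioi 0) := by
  intro t₀ (ht₀ : 0 < t₀)
  refine (continuousAt_of_dominated (F := fun t x => b x * g (t * v x) ^ q)
    (bound := fun x => C * (2 * t₀) ^ q * |v x| ^ q)
    (Eventually.of_forall fun t =>
      hbm.mul (hg.continuous.aemeasurable_comp_const_mul_rpow hv t q).aestronglyMeasurable) ?_
    (hvq.const_mul _) (Eventually.of_forall fun x => continuousAt_const.mul
      (hg.continuous.continuousAt_comp_mul_const_rpow (Or.inr hq)))).continuousWithinAt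
  filter_upwards [Ioo_mem_nhds ht₀ (by linarith : t₀ < 2 * t₀)] with t ht
  filter_upwards [hb, hv_nn] with x hbx hvx
  calc ‖b x * g (t * v x) ^ q‖ ≤ C * (t * v x) ^ q :=
        hg.abs_mul_rpow_le hg0 hbx (mul_nonneg ht.1.le hvx) hq
    _ ≤ C * (2 * t₀ * v x) ^ q := by
        gcongr
        · exact (abs_nonneg _).trans hbx
        · exact mul_nonneg ht.1.le hvx
        · exact ht.2.le
    _ = C * (2 * t₀) ^ q * |v x| ^ q := by
        rw [abs_of_nonneg hvx, Real.mul_rpow (by linarith) hvx]; ring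

theorem fiberMap_coercive_and_exists_isMinOn (hg : HasDualChangeDeriv g) (hg0 : g 0 = 0)
    (hμ : μ ≠ 0) {φ : ℝ → ℝ} {a c K e q C : ℝ} (ha : 0 < a) (hc : 0 < c) (hK : 0 ≤ K)
    (he : e < 0) (hq0 : 0 < q) (hq2 : q < 2) (hh : Integrable h μ)
    (hh_pos : ∀ᵐ x ∂μ, 0 < h x) (hbm : AEStronglyMeasurable b μ) (hb : ∀ᵐ x ∂μ, |b x| ≤ C)
    (hv : AEMeasurable v μ) (hv_pos : ∀ᵐ x ∂μ, 0 < v x)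
    (hvq : Integrable (fun x => |v x| ^ q) μ) (hhv : Integrable (fun x => h x * v x ^ e) μ)
    (hφ : ∀ t ∈ Ioi (0 : ℝ), φ t = a / 2 * t ^ 2 + c * ∫ x, h x * g (t * v x) ^ e ∂μ
      - K * ∫ x, b x * g (t * v x) ^ q ∂μ) :
    Tendsto φ (𝓝[>] 0) atTop ∧ Tendsto φ atTop atTop ∧ ∃ t₀ ∈ Ioi 0, IsMinOn φ (Ioi 0) t₀ := by
  have hh_nn : ∀ᵐ x ∂μ, 0 ≤ h x := hh_pos.mono fun _ hx => hx.le
  have hv_nn : ∀ᵐ x ∂μ, 0 ≤ v x := hv_pos.mono fun _ hx => hx.le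
  have hIh : 0 < ∫ x, h x * v x ^ e ∂μ := integral_pos_of_ae_pos hμ
    (by filter_upwards [hh_pos, hv_pos] with x hx hvx using mul_pos hx (Real.rpow_pos_of_pos hvx _))
    hhv
  have hcont : ContinuousOn φ (Ioi 0) :=
    ((continuousOn_const.mul (continuousOn_pow 2)).add (continuousOn_const.mul
      (hg.continuousOn_integral_mul_rpow_comp_mul_of_nonpos hg0 he.le hh hh_nn hv hv_pos hhv))).sub
      (continuousOn_const.mul (hg.continuousOn_integral_mul_rpow_comp_mul_of_nonneg hg0 hq0.le hbm
        hb hv hv_nn hvq)) |>.congr hφ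
  have hlow : ∀ t, 0 < t → a / 2 * t ^ 2 + c * (∫ x, h x * v x ^ e ∂μ) * t ^ e
      - K * C * (∫ x, |v x| ^ q ∂μ) * t ^ q ≤ φ t := by
    intro t ht
    have hH := mul_le_mul_of_nonneg_left (hg.mul_integral_le_integral_mul_rpow_comp_mul hg0 he.le
      hh_nn hv_pos hhv ht (hg.integrable_mul_rpow_comp_mul hg0 he.le hh hh_nn hv hv_pos hhv ht))
      hc.le
    have hB := mul_le_mul_of_nonneg_left ((le_abs_self _).trans
      (hg.abs_integral_mul_rpow_comp_mul_le hg0 hq0.le hb hv_nn hvq ht.le)) hK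
    rw [hφ t ht]
    linear_combination hH + hB
  have h0 := tendsto_nhdsGT_zero_atTop_of_rpow_le (half_pos ha).le (mul_pos hc hIh) he hq0 hlow
  have hinf := tendsto_atTop_atTop_of_rpow_le (half_pos ha) (mul_pos hc hIh).le hq2 hlow
  exact ⟨h0, hinf, exists_isMinOn_Ioi_of_tendsto_atTop hcont h0 hinf⟩

end HasDualChangeDeriv

theorem stmt_15_general (N : ℕ)
    (Ω : Set (EuclideanSpace ℝ (Fin N)))
    (hΩb : Bornology.IsBounded Ω) (hΩpos : 0 < volume Ω)
    (γ : ℝ) (hγ : 1 < γ)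
    (g : ℝ → ℝ) (hg0 : g 0 = 0)
    (hg : ∀ t : ℝ, HasDerivAt g ((1 + 2 * g t ^ 2) ^ (-(1 / 2) : ℝ)) t)
    (h : EuclideanSpace ℝ (Fin N) → ℝ)
    (hh_int : IntegrableOn h Ω)
    (hh_pos : ∀ᵐ x ∂(volume.restrict Ω), 0 < h x)
    (p : ℝ) (hp0 : 0 < p) (hp1 : p < 1)
    (b : EuclideanSpace ℝ (Fin N) → ℝ)
    (hb : MemLp b ⊤ (volume.restrict Ω))
    (a : ℝ) (ha : 0 < a)
    (v : EuclideanSpace ℝ (Fin N) → ℝ)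
    (hv_meas : AEMeasurable v (volume.restrict Ω))
    (hv_pos : ∀ᵐ x ∂(volume.restrict Ω), 0 < v x)
    (hv_intp : IntegrableOn (fun x => |v x| ^ (p + 1)) Ω)
    (hv_inth : IntegrableOn (fun x => h x * v x ^ (1 - γ)) Ω)
    (φ : ℝ → ℝ)
    (hφ : ∀ t : ℝ, φ t =
      a / 2 * t ^ 2 + (1 / (γ - 1)) * ∫ x in Ω, h x * g (t * v x) ^ (1 - γ)
        - (1 / (p + 1)) * ∫ x in Ω, b x * g (t * v x) ^ (p + 1)) :
    Tendsto φ (nhdsWithin 0 (Set.Ioi 0)) atTop ∧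
    Tendsto φ atTop atTop ∧
    ∃ t₀ : ℝ, 0 < t₀ ∧ φ t₀ = sInf (φ '' Set.Ioi 0) := by
  replace hg : HasDualChangeDeriv g := hg
  set μ := volume.restrict Ω
  have : IsFiniteMeasure μ := ⟨by simpa [μ] using hΩb.measure_lt_top⟩
  have hμ : μ ≠ 0 := by simpa [μ, Measure.restrict_eq_zero] using hΩpos.ne'
  have hγ1 : 0 < γ - 1 := by linarith
  have hq : 0 < p + 1 := by linarith
  obtain ⟨C, hC⟩ := hb.exists_ae_abs_le
  -- `∫ x in Ω, …` extends as far right as possible, so in `hφ` the `b`-term sits inside the first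
  -- integral, as a summand constant in `x` whose integral is `μ.real univ` times itself.
  have hφ' (t : ℝ) (ht : t ∈ Ioi 0) : φ t = a / 2 * t ^ 2
      + 1 / (γ - 1) * ∫ x, h x * g (t * v x) ^ (1 - γ) ∂μ
      - μ.real univ / ((γ - 1) * (p + 1)) * ∫ x, b x * g (t * v x) ^ (p + 1) ∂μ := by
    have hI : Integrable (fun x => h x * g (t * v x) ^ (1 - γ)) μ :=
      hg.integrable_mul_rpow_comp_mul hg0 (by linarith) hh_int (hh_pos.mono fun _ hx => hx.le)
        hv_meas hv_pos hv_inth ht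
    rw [hφ, integral_sub hI (integrable_const _), integral_const, smul_eq_mul]
    field_simp
    ring
  obtain ⟨h0, hinf, t₀, ht₀, hmin⟩ := hg.fiberMap_coercive_and_exists_isMinOn hg0 hμ ha
    (one_div_pos.2 hγ1) (div_nonneg measureReal_nonneg (mul_pos hγ1 hq).le) (by linarith) hq
    (by linarith) hh_int hh_pos hb.1 hC hv_meas hv_pos hv_intp hv_inth hφ'
  exact ⟨h0, hinf, t₀, ht₀, ((hmin.isGLB ht₀).csInf_eq (nonempty_Ioi.image φ)).symm⟩

/-- behaviour of the fiber map in the sublinear case: it blows up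
at `0⁺` and at `+∞` and attains its infimum on `(0,∞)`. -/
theorem stmt_15 (N : ℕ) (hN : 3 ≤ N)
    (Ω : Set (EuclideanSpace ℝ (Fin N))) (hΩo : IsOpen Ω)
    (hΩb : Bornology.IsBounded Ω) (hΩpos : 0 < volume Ω)
    (γ : ℝ) (hγ : 1 < γ)
    (g : ℝ → ℝ) (hg0 : g 0 = 0)
    (hg : ∀ t : ℝ, HasDerivAt g ((1 + 2 * g t ^ 2) ^ (-(1 / 2) : ℝ)) t)
    (h : EuclideanSpace ℝ (Fin N) → ℝ)
    (hh_int : IntegrableOn h Ω)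
    (hh_pos : ∀ᵐ x ∂(volume.restrict Ω), 0 < h x)
    (p : ℝ) (hp0 : 0 < p) (hp1 : p < 1)
    (b : EuclideanSpace ℝ (Fin N) → ℝ)
    (hb : MemLp b ⊤ (volume.restrict Ω))
    (a : ℝ) (ha : 0 < a)
    (v : EuclideanSpace ℝ (Fin N) → ℝ)
    (hv_meas : AEMeasurable v (volume.restrict Ω))
    (hv_pos : ∀ᵐ x ∂(volume.restrict Ω), 0 < v x)
    (hv_intp : IntegrableOn (fun x => |v x| ^ (p + 1)) Ω)
    (hv_inth : IntegrableOn (fun x => h x * v x ^ (1 - γ)) Ω)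
    (φ : ℝ → ℝ)
    (hφ : ∀ t : ℝ, φ t =
      a / 2 * t ^ 2 + (1 / (γ - 1)) * ∫ x in Ω, h x * g (t * v x) ^ (1 - γ)
        - (1 / (p + 1)) * ∫ x in Ω, b x * g (t * v x) ^ (p + 1)) :
    Tendsto φ (nhdsWithin 0 (Set.Ioi 0)) atTop ∧
    Tendsto φ atTop atTop ∧
    ∃ t₀ : ℝ, 0 < t₀ ∧ φ t₀ = sInf (φ '' Set.Ioi 0) :=
  stmt_15_general N Ω hΩb hΩpos γ hγ g hg0 hg h hh_int hh_pos p hp0 hp1 b hb a ha v hv_meas hv_pos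
    hv_intp hv_inth φ hφ
end
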